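/- arXiv:1811.08395 — 9 statements merged into one kernel-verified Lean document; each statement's English description precedes it below -/
import Mathlib

section
/- Let E be a real inner product space, X ⊆ E, y ∈ X, and u ∈ Vor_X(y). Let γ : ℝ → E be a curve with γ(t) ∈ X for all t, γ(0) = y, and γ differentiable at 0. Then ⟪u − y, γ'(0)⟫ = 0. (That is, the Voronoi cell Vor_X(y) is contained in the normal space of X at y: every vector u − y with u ∈ Vor_X(y) is perpendicular to every tangent direction of X at y.) -/
open RealInnerProductSpace

/-- The Voronoi cell is contained in the normal space: if `u ∈ Vor_X(y)`
and `γ` is a curve in `X` through `y = γ 0` differentiable at `0`, then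
`u - y` is perpendicular to the tangent vector `γ'(0)`. -/
theorem voronoi_cell_subset_normal_space {E : Type*} [NormedAddCommGroup E]
    [InnerProductSpace ℝ E] (X : Set E) (y : E) (hy : y ∈ X)
    (u : E) (hu : ∀ x ∈ X, ‖u - y‖ ≤ ‖u - x‖)
    (γ : ℝ → E) (hγX : ∀ t : ℝ, γ t ∈ X) (hγ0 : γ 0 = y)
    (hγd : DifferentiableAt ℝ γ 0) :
    ⟪u - y, deriv γ 0⟫ = 0 := by
  set d := deriv γ 0
  have hh : HasDerivAt (fun t => u - γ t) (-d) 0 := by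
    have := ((hasDerivAt_const (0:ℝ) u).sub hγd.hasDerivAt : HasDerivAt (fun t => u - γ t) (0 - d) 0); rwa [zero_sub] at this
  have hg : HasDerivAt (fun t => ⟪u - γ t, u - γ t⟫)
      (⟪u - γ 0, -d⟫ + ⟪-d, u - γ 0⟫) 0 := hh.inner ℝ hh
  have hmin : IsLocalMin (fun t => ⟪u - γ t, u - γ t⟫) 0 := by
    apply Filter.Eventually.of_forall
    intro t
    simp only [real_inner_self_eq_norm_sq, hγ0]
    have := hu (γ t) (hγX t)
    exact pow_le_pow_left₀ (norm_nonneg _) this 2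
  have h0 : ⟪u - γ 0, -d⟫ + ⟪-d, u - γ 0⟫ = 0 := hmin.hasDerivAt_eq_zero hg
  rw [hγ0] at h0
  rw [inner_neg_right, inner_neg_left, real_inner_comm d (u - y)] at h0
  rw [real_inner_comm]; linarith
end

section
/- Let f₁,…,f_m be inhomogeneous quadratic polynomials on ℝⁿ, say fᵢ(x) = ½·xᵀAᵢx + bᵢᵀx + cᵢ with Aᵢ an n×n real symmetric matrix (the Hessian of fᵢ), bᵢ ∈ ℝⁿ and cᵢ ∈ ℝ. Let X = {x ∈ ℝⁿ : f₁(x) = ⋯ = f_m(x) = 0} and let y ∈ X. Suppose λ ∈ ℝᵐ satisfies λ₁A₁ + ⋯ + λ_mA_m ⪯ I_n (i.e., I_n − Σᵢ λᵢAᵢ is positive semidefinite), and set u = y − ½·Σᵢ λᵢ(Aᵢy + bᵢ) (that is, u = y − ½·Jac_f(y)·λ where Jac_f(y) is the n×m matrix whose columns are the gradients ∇fᵢ(y)). Then u ∈ Vor_X(y), i.e., ‖u − y‖ ≤ ‖u − x‖ for all x ∈ X. -/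
private lemma aux_psd_expand (n m : ℕ) (A : Fin m → Matrix (Fin n) (Fin n) ℝ)
    (lam : Fin m → ℝ) (d : Fin n → ℝ) :
    dotProduct (star d)
        (((1 : Matrix (Fin n) (Fin n) ℝ) - ∑ i, lam i • A i).mulVec d)
      = (∑ j, d j ^ 2) - ∑ i, lam i * ∑ j, ∑ k, d j * A i j k * d k := by
  rw [Matrix.sub_mulVec, dotProduct_sub, Matrix.one_mulVec]
  congr 1
  · simp [dotProduct, sq]
  · simp only [dotProduct, Matrix.mulVec, Pi.star_apply, star_trivial,
      Matrix.sum_apply, Matrix.smul_apply, smul_eq_mul, Finset.mul_sum, Finset.sum_mul]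
    calc (∑ j, ∑ k, ∑ i, d j * (lam i * A i j k * d k))
        = ∑ j, ∑ i, ∑ k, d j * (lam i * A i j k * d k) :=
          Finset.sum_congr rfl fun j _ => Finset.sum_comm
      _ = ∑ i, ∑ j, ∑ k, d j * (lam i * A i j k * d k) := Finset.sum_comm
      _ = ∑ i : Fin m, ∑ j, ∑ k, lam i * (d j * A i j k * d k) :=
          Finset.sum_congr rfl fun i _ => Finset.sum_congr rfl fun j _ =>
            Finset.sum_congr rfl fun k _ => by ring

/-- Let `fᵢ(x) = ½ xᵀAᵢx + bᵢᵀx + cᵢ` be quadratic polynomials on `ℝⁿ`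
(with symmetric Hessians `Aᵢ`), `X = V(f₁,…,f_m)`, and `y ∈ X`.  If `λ ∈ ℝᵐ` satisfies
`Σ λᵢAᵢ ⪯ Iₙ` and `u = y − ½ Σ λᵢ(Aᵢy + bᵢ)`, then `u` lies in the Voronoi cell of `y`,
i.e. `‖u − y‖ ≤ ‖u − x‖` for all `x ∈ X` (Euclidean norm). -/
theorem spectrahedron_subset_voronoi (n m : ℕ)
    (A : Fin m → Matrix (Fin n) (Fin n) ℝ) (hA : ∀ i, (A i).IsSymm)
    (b : Fin m → Fin n → ℝ) (c : Fin m → ℝ)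
    (f : Fin m → EuclideanSpace ℝ (Fin n) → ℝ)
    (hf : ∀ (i : Fin m) (x : EuclideanSpace ℝ (Fin n)),
      f i x = (1 / 2) * (∑ j, ∑ k, x j * A i j k * x k) + (∑ j, b i j * x j) + c i)
    (X : Set (EuclideanSpace ℝ (Fin n))) (hX : X = {x | ∀ i : Fin m, f i x = 0})
    (y : EuclideanSpace ℝ (Fin n)) (hy : y ∈ X)
    (lam : Fin m → ℝ)
    (hpsd : ((1 : Matrix (Fin n) (Fin n) ℝ) - ∑ i, lam i • A i).PosSemidef)
    (u : EuclideanSpace ℝ (Fin n))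
    (hu : ∀ j : Fin n, u j = y j - (1 / 2) * ∑ i, lam i * ((∑ k, A i j k * y k) + b i j)) :
    ∀ x ∈ X, ‖u - y‖ ≤ ‖u - x‖ := by
  subst hX
  intro x hx
  simp only [Set.mem_setOf_eq] at hx hy
  have hxy : ∀ i : Fin m, (∑ j, ∑ k, (x j) * A i j k * (y k))
      = ∑ j, ∑ k, (y j) * A i j k * (x k) := by
    intro i
    rw [Finset.sum_comm]
    refine Finset.sum_congr rfl fun j _ => Finset.sum_congr rfl fun k _ => ?_
    rw [← (hA i).apply j k]; ring
  have hkey : ∀ i : Fin m,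
      (∑ j, ((∑ k, A i j k * y k) + b i j) * (x j - y j))
        = -(1/2) * ∑ j, ∑ k, (x j - y j) * A i j k * (x k - y k) := by
    intro i
    have hx' := hx i
    have hy' := hy i
    rw [hf] at hx' hy'
    have e1 : (∑ j, ((∑ k, A i j k * y k) + b i j) * (x j - y j))
        = (∑ j, ∑ k, (x j) * A i j k * (y k)) - (∑ j, ∑ k, (y j) * A i j k * (y k))
          + ((∑ j, b i j * x j) - (∑ j, b i j * y j)) := by
      rw [← Finset.sum_sub_distrib, ← Finset.sum_sub_distrib, ← Finset.sum_add_distrib]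
      refine Finset.sum_congr rfl fun j _ => ?_
      have t1 : (∑ k, (x j) * A i j k * (y k)) = x j * ∑ k, A i j k * y k := by
        rw [Finset.mul_sum]; exact Finset.sum_congr rfl fun k _ => by ring
      have t2 : (∑ k, (y j) * A i j k * (y k)) = y j * ∑ k, A i j k * y k := by
        rw [Finset.mul_sum]; exact Finset.sum_congr rfl fun k _ => by ring
      rw [t1, t2]; ring
    have e2 : (∑ j, ∑ k, (x j - y j) * A i j k * (x k - y k))
        = (∑ j, ∑ k, (x j) * A i j k * (x k)) - (∑ j, ∑ k, (x j) * A i j k * (y k))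
          - (∑ j, ∑ k, (y j) * A i j k * (x k)) + (∑ j, ∑ k, (y j) * A i j k * (y k)) := by
      rw [← Finset.sum_sub_distrib, ← Finset.sum_sub_distrib, ← Finset.sum_add_distrib]
      refine Finset.sum_congr rfl fun j _ => ?_
      rw [← Finset.sum_sub_distrib, ← Finset.sum_sub_distrib, ← Finset.sum_add_distrib]
      exact Finset.sum_congr rfl fun k _ => by ring
    rw [e1, e2, hxy i] at *
    linarith
  have h2 : (∑ j, (u j - y j) * (x j - y j))
      = (1/4) * ∑ i, lam i * ∑ j, ∑ k, (x j - y j) * A i j k * (x k - y k) := by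
    have step1 : (∑ j, (u j - y j) * (x j - y j))
        = ∑ j, ∑ i, -(1/2) * (lam i * (((∑ k, A i j k * y k) + b i j) * (x j - y j))) := by
      refine Finset.sum_congr rfl fun j _ => ?_
      rw [hu j]
      rw [show (y j - 1 / 2 * ∑ i, lam i * ((∑ k, A i j k * y k) + b i j) - y j) * (x j - y j)
          = (∑ i, lam i * ((∑ k, A i j k * y k) + b i j)) * (-(1/2) * (x j - y j)) by ring]
      rw [Finset.sum_mul]
      exact Finset.sum_congr rfl fun i _ => by ring
    rw [step1, Finset.sum_comm, Finset.mul_sum]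
    refine Finset.sum_congr rfl fun i _ => ?_
    have t : (∑ j, -(1/2) * (lam i * (((∑ k, A i j k * y k) + b i j) * (x j - y j))))
        = (-(1/2) * lam i) * ∑ j, ((∑ k, A i j k * y k) + b i j) * (x j - y j) := by
      rw [Finset.mul_sum]; exact Finset.sum_congr rfl fun j _ => by ring
    rw [t, hkey i]; ring
  have hQ : (∑ i, lam i * ∑ j, ∑ k, (x j - y j) * A i j k * (x k - y k))
      ≤ ∑ j, (x j - y j)^2 := by
    have h0 := hpsd.dotProduct_mulVec_nonneg (fun j => x j - y j)
    rw [aux_psd_expand] at h0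
    linarith
  have hexp : (∑ j, (u j - x j)^2)
      = (∑ j, (u j - y j)^2) - 2 * (∑ j, (u j - y j) * (x j - y j))
        + ∑ j, (x j - y j)^2 := by
    rw [Finset.mul_sum, ← Finset.sum_sub_distrib, ← Finset.sum_add_distrib]
    exact Finset.sum_congr rfl fun j _ => by ring
  have hd2 : (0:ℝ) ≤ ∑ j, (x j - y j)^2 :=
    Finset.sum_nonneg fun j _ => sq_nonneg _
  have hfin : (∑ j, (u j - y j)^2) ≤ ∑ j, (u j - x j)^2 := by
    rw [hexp, h2]; linarith
  rw [EuclideanSpace.norm_eq, EuclideanSpace.norm_eq]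
  apply Real.sqrt_le_sqrt
  simpa [PiLp.sub_apply, Real.norm_eq_abs, sq_abs] using hfin
end

section
/- Let X = {(t, t², t³) : t ∈ ℝ} ⊆ ℝ³ be the twisted cubic curve (equivalently, X = {x ∈ ℝ³ : x₂ = x₁², x₃ = x₁x₂}), and let y = (0,0,0) ∈ X. If u = (0, u₂, u₃) satisfies 2u₂ ≤ 1 − u₃², then u ∈ Vor_X(y); that is, for all t ∈ ℝ, t² + (t² − u₂)² + (t³ − u₃)² ≥ u₂² + u₃². (The region in the normal plane {u₁ = 0} bounded by the parabola 2u₂ = 1 − u₃² is contained in the Voronoi cell of the origin.) -/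
/-- For the twisted cubic `X = {(t,t²,t³)}` and `y = 0`, every point
`u = (0,u₂,u₃)` of the normal plane with `2u₂ ≤ 1 − u₃²` lies in the Voronoi cell of
the origin; that is, `t² + (t² − u₂)² + (t³ − u₃)² ≥ u₂² + u₃²` for all `t`. -/
theorem parabola_region_subset_voronoi_twisted_cubic
    (X : Set (EuclideanSpace ℝ (Fin 3)))
    (hX : X = {p | ∃ t : ℝ, p = (WithLp.equiv 2 (Fin 3 → ℝ)).symm ![t, t ^ 2, t ^ 3]})
    (u2 u3 : ℝ) (h : 2 * u2 ≤ 1 - u3 ^ 2)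
    (u : EuclideanSpace ℝ (Fin 3))
    (hu : u = (WithLp.equiv 2 (Fin 3 → ℝ)).symm ![0, u2, u3]) :
    (∀ x ∈ X, ‖u - 0‖ ≤ ‖u - x‖) ∧
    (∀ t : ℝ, u2 ^ 2 + u3 ^ 2 ≤ t ^ 2 + (t ^ 2 - u2) ^ 2 + (t ^ 3 - u3) ^ 2) := by
  have key : ∀ t : ℝ, u2 ^ 2 + u3 ^ 2 ≤ t ^ 2 + (t ^ 2 - u2) ^ 2 + (t ^ 3 - u3) ^ 2 := by
    intro t
    nlinarith [sq_nonneg (t ^ 3), mul_nonneg (sq_nonneg t) (sq_nonneg (t - u3)),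
      mul_nonneg (sq_nonneg t) (sub_nonneg.2 h), sq_nonneg t]
  refine ⟨?_, key⟩
  intro x hx
  rw [hX] at hx
  obtain ⟨t, rfl⟩ := hx
  subst hu
  refine (pow_le_pow_iff_left₀ (norm_nonneg _) (norm_nonneg _) two_ne_zero).mp ?_
  rw [sub_zero]
  simp only [EuclideanSpace.norm_eq]
  rw [Real.sq_sqrt (by positivity), Real.sq_sqrt (by positivity)]
  have : ∀ i : Fin 3, ((WithLp.equiv 2 (Fin 3 → ℝ)).symm ![0, u2, u3] -
      (WithLp.equiv 2 (Fin 3 → ℝ)).symm ![t, t ^ 2, t ^ 3]) i =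
      (![0, u2, u3] - ![t, t ^ 2, t ^ 3]) i := fun i => rfl
  simp only [Fin.sum_univ_three, this, Pi.sub_apply]
  simp [WithLp.equiv_symm_apply, Real.norm_eq_abs, sq_abs]
  nlinarith [key t]
end

section
/- Fix integers m, n, r with 1 ≤ r ≤ min(m,n). Let v₁ ≥ v₂ ≥ ⋯ ≥ v_r > 0 be real numbers and let V be the m×n real matrix with V_{ii} = vᵢ for 1 ≤ i ≤ r and all other entries 0. Let X = {A ∈ ℝ^{m×n} : rank A ≤ r}. Then a matrix U ∈ ℝ^{m×n} lies in the Voronoi cell Vor_X(V) (with respect to the Frobenius norm) if and only if U_{ij} = V_{ij} whenever i ≤ r or j ≤ r, and the lower-right (m−r)×(n−r) block U₂₂ = (U_{ij})_{i>r, j>r} has spectral norm at most v_r. In particular, Vor_X(V) is congruent to v_r times the unit ball of the spectral norm on (m−r)×(n−r) matrices. -/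
/-- The Frobenius norm of a real matrix: `‖A‖_F = sqrt (Σᵢⱼ Aᵢⱼ²)`. -/
noncomputable def frobNorm {m n : ℕ} (A : Matrix (Fin m) (Fin n) ℝ) : ℝ :=
  Real.sqrt (∑ i, ∑ j, (A i j) ^ 2)

/-- The spectral norm of a real matrix: its operator norm as a linear map between
Euclidean spaces (= largest singular value). -/
noncomputable def specNorm {m n : ℕ} (A : Matrix (Fin m) (Fin n) ℝ) : ℝ :=
  ‖LinearMap.toContinuousLinearMap (Matrix.toEuclideanLin A)‖

open scoped BigOperators Matrix

/-- Sum over `Fin m` split at `r ≤ m`. -/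
lemma vor_sum_split {m r : ℕ} (hrm : r ≤ m) (f : Fin m → ℝ) :
    ∑ i, f i = (∑ i : Fin r, f ⟨i, by omega⟩) + ∑ i : Fin (m - r), f ⟨r + i, by omega⟩ := by
  have hm : m = r + (m - r) := by omega
  rw [← Equiv.sum_comp (finCongr hm).symm f, Fin.sum_univ_add]
  congr 1

lemma vor_rank_le_of_row_support {m n r : ℕ} (hrm : r ≤ m) (M : Matrix (Fin m) (Fin n) ℝ)
    (h : ∀ (i : Fin m) (j : Fin n), r ≤ (i : ℕ) → M i j = 0) : M.rank ≤ r := by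
  classical
  have hfact : M = (Matrix.of fun (i : Fin m) (t : Fin r) =>
      if (i : ℕ) = (t : ℕ) then (1:ℝ) else 0) *
      (Matrix.of fun (t : Fin r) (j : Fin n) => M ⟨t, by omega⟩ j) := by
    ext i j
    rw [Matrix.mul_apply]
    by_cases hi : (i : ℕ) < r
    · rw [Finset.sum_eq_single ⟨(i : ℕ), hi⟩]
      · simp
      · intro b _ hb
        simp only [Matrix.of_apply]
        rw [if_neg, zero_mul]
        intro hc; apply hb; ext; simp [hc]
      · simp
    · rw [h i j (by omega), Finset.sum_eq_zero]
      intro b _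
      simp only [Matrix.of_apply]
      rw [if_neg (by omega), zero_mul]
  rw [hfact]
  exact le_trans (Matrix.rank_mul_le_right _ _)
    (le_trans (Matrix.rank_le_card_height _) (by simp))

lemma vor_rank_le_of_col_support {m n r : ℕ} (hrn : r ≤ n) (M : Matrix (Fin m) (Fin n) ℝ)
    (h : ∀ (i : Fin m) (j : Fin n), r ≤ (j : ℕ) → M i j = 0) : M.rank ≤ r := by
  rw [← Matrix.rank_transpose]
  exact vor_rank_le_of_row_support hrn M.transpose (fun j i hj => h i j hj)

/-- trace of a product of two real PSD matrices is nonnegative. -/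
lemma vor_trace_mul_nonneg {k : ℕ} {S C : Matrix (Fin k) (Fin k) ℝ}
    (hS : ∀ z : Fin k → ℝ, 0 ≤ z ⬝ᵥ S.mulVec z) (hC : C.PosSemidef) :
    0 ≤ (S * C).trace := by
  obtain ⟨E, rfl⟩ : ∃ E : Matrix (Fin k) (Fin k) ℝ, C = Eᴴ * E := by
    open scoped MatrixOrder in
    exact CStarAlgebra.nonneg_iff_eq_star_mul_self.mp hC.nonneg
  have : (S * (Eᴴ * E)).trace = (E * S * Eᴴ).trace := by
    rw [← Matrix.mul_assoc, Matrix.trace_mul_cycle]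
  rw [this, Matrix.trace]
  apply Finset.sum_nonneg
  intro i _
  have : (E * S * Eᴴ) i i = (fun j => E i j) ⬝ᵥ S.mulVec (fun j => E i j) := by
    simp only [Matrix.mul_apply, Matrix.conjTranspose_apply, dotProduct,
      Matrix.mulVec, RCLike.star_def, starRingEnd_apply, star_trivial]
    simp only [Finset.sum_mul, Finset.mul_sum]
    rw [Finset.sum_comm]
    apply Finset.sum_congr rfl
    intro a _
    apply Finset.sum_congr rfl
    intro b _
    ring
  rw [Matrix.diag_apply, this]
  exact hS _

lemma vor_euclid_norm_sq (n : ℕ) (w : EuclideanSpace ℝ (Fin n)) :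
    ‖w‖ ^ 2 = ∑ j, (w j) ^ 2 := by
  rw [EuclideanSpace.norm_eq, Real.sq_sqrt (by positivity)]
  apply Finset.sum_congr rfl
  intro j _
  rw [Real.norm_eq_abs, sq_abs]

/-- Bessel inequality, matrix-row form. -/
lemma vor_bessel_rows {m n k : ℕ} (M : Matrix (Fin m) (Fin n) ℝ)
    (x : Fin k → EuclideanSpace ℝ (Fin n)) (hx : Orthonormal ℝ x) :
    ∑ i : Fin k, ∑ p : Fin m, (M.mulVec (x i) p) ^ 2 ≤ ∑ p, ∑ j, (M p j) ^ 2 := by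
  rw [Finset.sum_comm]
  apply Finset.sum_le_sum
  intro p _
  set w : EuclideanSpace ℝ (Fin n) := (WithLp.equiv 2 (Fin n → ℝ)).symm (fun j => M p j) with hw
  have hinner : ∀ i, (inner ℝ w (x i) : ℝ) = M.mulVec (x i) p := by
    intro i
    simp only [PiLp.inner_apply, RCLike.inner_apply, conj_trivial, Matrix.mulVec,
      dotProduct, hw, WithLp.equiv_symm_apply]
    exact Finset.sum_congr rfl fun j _ => mul_comm _ _
  have hb := hx.sum_inner_products_le (𝕜 := ℝ) w (s := Finset.univ)
  have hnw : ‖w‖ ^ 2 = ∑ j, (M p j) ^ 2 := by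
    rw [vor_euclid_norm_sq]
    apply Finset.sum_congr rfl
    intro j _
    simp [hw]
  calc ∑ i : Fin k, (M.mulVec (x i) p) ^ 2
      = ∑ i : Fin k, ‖(inner ℝ (x i) w : ℝ)‖ ^ 2 := by
        apply Finset.sum_congr rfl
        intro i _
        rw [real_inner_comm, hinner i, Real.norm_eq_abs, sq_abs]
    _ ≤ ‖w‖ ^ 2 := hb
    _ = ∑ j, (M p j) ^ 2 := hnw

/-- `1 - B Bᵀ` is PSD when columns of `B` are coordinates of an orthonormal family. -/
lemma vor_one_sub_BBt_posSemidef {n k : ℕ} (g : Fin k → Fin n) (hg : Function.Injective g)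
    (x : Fin k → EuclideanSpace ℝ (Fin n)) (hx : Orthonormal ℝ x)
    (B : Matrix (Fin k) (Fin k) ℝ) (hB : ∀ p i, B p i = x i (g p)) :
    (1 - B * Bᵀ).PosSemidef := by
  classical
  refine Matrix.PosSemidef.of_dotProduct_mulVec_nonneg ?_ ?_
  · unfold Matrix.IsHermitian
    have : (B * Bᵀ)ᴴ = B * Bᵀ := by
      ext a b
      simp only [Matrix.conjTranspose_apply, Matrix.mul_apply, Matrix.transpose_apply,
        star_trivial]
      exact Finset.sum_congr rfl fun c _ => by ring
    rw [Matrix.conjTranspose_sub, this, Matrix.conjTranspose_one]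
  · intro y
    set yh : EuclideanSpace ℝ (Fin n) :=
      (WithLp.equiv 2 (Fin n → ℝ)).symm (fun j => ∑ p, if g p = j then y p else 0) with hyh
    have hyhval : ∀ p, yh (g p) = y p := by
      intro p
      simp only [hyh, WithLp.equiv_symm_apply, PiLp.toLp_apply]
      rw [Finset.sum_eq_single p]
      · simp
      · intro b _ hb
        rw [if_neg (fun hc => hb (hg hc))]
      · simp
    have hyzero : ∀ j, j ∉ Finset.univ.image g → yh j = 0 := by
      intro j hj
      simp only [hyh, WithLp.equiv_symm_apply, PiLp.toLp_apply]
      apply Finset.sum_eq_zero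
      intro p _
      rw [if_neg]
      intro hc
      exact hj (Finset.mem_image.mpr ⟨p, Finset.mem_univ p, hc⟩)
    have hnorm : ‖yh‖ ^ 2 = ∑ p, (y p) ^ 2 := by
      rw [vor_euclid_norm_sq]
      rw [← Finset.sum_subset (Finset.subset_univ (Finset.univ.image g))
        (fun j _ hj => by rw [hyzero j hj, zero_pow two_ne_zero])]
      rw [Finset.sum_image (fun a _ b _ hab => hg hab)]
      exact Finset.sum_congr rfl fun p _ => by rw [hyhval p]
    have hinner : ∀ i, (inner ℝ (x i) yh : ℝ) = ∑ p, B p i * y p := by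
      intro i
      simp only [PiLp.inner_apply, RCLike.inner_apply, conj_trivial]
      rw [← Finset.sum_subset (Finset.subset_univ (Finset.univ.image g))
        (fun j _ hj => by rw [hyzero j hj, zero_mul])]
      rw [Finset.sum_image (fun a _ b _ hab => hg hab)]
      exact Finset.sum_congr rfl fun p _ => by rw [hyhval p, hB p i, mul_comm]
    have hbessel := hx.sum_inner_products_le (𝕜 := ℝ) yh (s := Finset.univ)
    have hquad : star y ⬝ᵥ (1 - B * Bᵀ) *ᵥ y
        = ∑ p, (y p) ^ 2 - ∑ i, (∑ p, B p i * y p) ^ 2 := by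
      have hsy : star y = y := by
        funext p; simp
      rw [hsy, Matrix.sub_mulVec, dotProduct_sub, Matrix.one_mulVec]
      congr 1
      · simp only [dotProduct]
        exact Finset.sum_congr rfl fun p _ => by ring
      · rw [← Matrix.mulVec_mulVec, Matrix.dotProduct_mulVec]
        simp only [dotProduct, Matrix.vecMul, Matrix.mulVec, Matrix.transpose_apply]
        apply Finset.sum_congr rfl
        intro i _
        rw [pow_two]
        congr 1 <;> (apply Finset.sum_congr rfl; intro p _; ring)
    rw [hquad]
    rw [sub_nonneg, ← hnorm]
    calc ∑ i, (∑ p, B p i * y p) ^ 2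
        = ∑ i, ‖(inner ℝ (x i) yh : ℝ)‖ ^ 2 := by
          apply Finset.sum_congr rfl
          intro i _
          rw [hinner i, Real.norm_eq_abs, sq_abs]
      _ ≤ ‖yh‖ ^ 2 := hbessel

/-- Central trace inequality. -/
lemma vor_central {k K : ℕ} (W : Matrix (Fin K) (Fin k) ℝ) (c : ℝ)
    (hW : ∀ z : Fin k → ℝ, ∑ p, (W.mulVec z p) ^ 2 ≤ c ^ 2 * ∑ j, (z j) ^ 2)
    (B : Matrix (Fin k) (Fin k) ℝ) (hBpsd : (1 - B * Bᵀ).PosSemidef) :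
    ∑ p, ∑ q, (W p q) ^ 2
      ≤ c ^ 2 * ((k : ℝ) - ∑ i, ∑ p, (B p i) ^ 2)
        + ∑ i, ∑ p, (W.mulVec (fun q => B q i) p) ^ 2 := by
  classical
  set S := Wᵀ * W with hSdef
  have hquad : ∀ z : Fin k → ℝ, z ⬝ᵥ S *ᵥ z = ∑ p, (W.mulVec z p) ^ 2 := by
    intro z
    rw [hSdef, ← Matrix.mulVec_mulVec, Matrix.dotProduct_mulVec]
    simp only [dotProduct, Matrix.vecMul, Matrix.mulVec, Matrix.transpose_apply]
    apply Finset.sum_congr rfl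
    intro p _
    rw [pow_two]
    congr 1 <;> (apply Finset.sum_congr rfl; intro q _; ring)
  have htrS : S.trace = ∑ p, ∑ q, (W p q) ^ 2 := by
    rw [Finset.sum_comm]
    simp only [hSdef, Matrix.trace, Matrix.diag_apply, Matrix.mul_apply,
      Matrix.transpose_apply]
    exact Finset.sum_congr rfl fun q _ => Finset.sum_congr rfl fun p _ => (pow_two _).symm
  have htrB : (B * Bᵀ).trace = ∑ i, ∑ p, (B p i) ^ 2 := by
    rw [Finset.sum_comm]
    simp only [Matrix.trace, Matrix.diag_apply, Matrix.mul_apply, Matrix.transpose_apply]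
    exact Finset.sum_congr rfl fun p _ => Finset.sum_congr rfl fun i _ => (pow_two _).symm
  have htrSB : (S * (B * Bᵀ)).trace = ∑ i, ∑ p, (W.mulVec (fun q => B q i) p) ^ 2 := by
    have h1 : (Bᵀ * S * B).trace = (S * (B * Bᵀ)).trace := by
      rw [Matrix.trace_mul_cycle Bᵀ S B, Matrix.trace_mul_comm]
    rw [← h1]
    rw [Matrix.trace]
    apply Finset.sum_congr rfl
    intro i _
    have : (Bᵀ * S * B) i i = (fun q => B q i) ⬝ᵥ S *ᵥ (fun q => B q i) := by
      simp only [Matrix.mul_apply, Matrix.transpose_apply, dotProduct, Matrix.mulVec]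
      simp only [Finset.sum_mul, Finset.mul_sum]
      rw [Finset.sum_comm]
      apply Finset.sum_congr rfl
      intro a _
      apply Finset.sum_congr rfl
      intro b _
      ring
    rw [Matrix.diag_apply, this, hquad]
  have hkey : 0 ≤ ((c ^ 2 • (1 : Matrix (Fin k) (Fin k) ℝ) - S) * (1 - B * Bᵀ)).trace := by
    apply vor_trace_mul_nonneg _ hBpsd
    intro z
    have : z ⬝ᵥ (c ^ 2 • (1 : Matrix (Fin k) (Fin k) ℝ) - S) *ᵥ z
        = c ^ 2 * (∑ j, (z j) ^ 2) - ∑ p, (W.mulVec z p) ^ 2 := by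
      rw [Matrix.sub_mulVec, dotProduct_sub, hquad]
      congr 1
      simp only [Matrix.smul_mulVec, Matrix.one_mulVec, dotProduct,
        Pi.smul_apply, smul_eq_mul, Finset.mul_sum]
      exact Finset.sum_congr rfl fun j _ => by ring
    rw [this, sub_nonneg]
    exact hW z
  have hexpand : ((c ^ 2 • (1 : Matrix (Fin k) (Fin k) ℝ) - S) * (1 - B * Bᵀ)).trace
      = c ^ 2 * ((k : ℝ) - (B * Bᵀ).trace) - (S.trace - (S * (B * Bᵀ)).trace) := by
    rw [Matrix.sub_mul, Matrix.mul_sub, Matrix.mul_sub, Matrix.mul_one, Matrix.mul_one,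
      smul_mul_assoc, Matrix.one_mul]
    rw [Matrix.trace_sub, Matrix.trace_sub, Matrix.trace_sub, Matrix.trace_smul,
      Matrix.trace_smul, Matrix.trace_one]
    simp only [smul_eq_mul, Fintype.card_fin]
    ring
  rw [hexpand, htrS, htrB, htrSB] at hkey
  linarith

lemma vor_toEuclideanLin_coord {K k : ℕ} (W : Matrix (Fin K) (Fin k) ℝ)
    (x : EuclideanSpace ℝ (Fin k)) (p : Fin K) :
    (Matrix.toEuclideanLin W x) p = W.mulVec (fun j => x j) p := rfl

lemma vor_norm_toEuclideanLin_sq {K k : ℕ} (W : Matrix (Fin K) (Fin k) ℝ)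
    (x : EuclideanSpace ℝ (Fin k)) :
    ‖Matrix.toEuclideanLin W x‖ ^ 2 = ∑ p, (W.mulVec (fun j => x j) p) ^ 2 := by
  rw [vor_euclid_norm_sq]
  exact Finset.sum_congr rfl fun p _ => by rw [vor_toEuclideanLin_coord]

lemma vor_specNorm_quad {K k : ℕ} (W : Matrix (Fin K) (Fin k) ℝ) {c : ℝ}
    (h : specNorm W ≤ c) (z : Fin k → ℝ) :
    ∑ p, (W.mulVec z p) ^ 2 ≤ c ^ 2 * ∑ j, (z j) ^ 2 := by
  set f := LinearMap.toContinuousLinearMap (Matrix.toEuclideanLin W) with hf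
  set x : EuclideanSpace ℝ (Fin k) := (WithLp.equiv 2 (Fin k → ℝ)).symm z with hx
  have h0 : 0 ≤ c := le_trans (norm_nonneg f) h
  have h1 : ‖f x‖ ≤ c * ‖x‖ :=
    le_trans (f.le_opNorm x) (mul_le_mul_of_nonneg_right h (norm_nonneg x))
  have h2 : ‖f x‖ ^ 2 ≤ (c * ‖x‖) ^ 2 := by
    apply pow_le_pow_left₀ (norm_nonneg _) h1
  have hfx : ‖f x‖ ^ 2 = ∑ p, (W.mulVec z p) ^ 2 := by
    have : f x = Matrix.toEuclideanLin W x := by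
      rw [hf]; simp
    rw [this, vor_norm_toEuclideanLin_sq]
    exact Finset.sum_congr rfl fun p _ => by
      congr 1
  have hxx : ‖x‖ ^ 2 = ∑ j, (z j) ^ 2 := by
    rw [vor_euclid_norm_sq]
    exact Finset.sum_congr rfl fun j _ => by rw [hx]; simp
  calc ∑ p, (W.mulVec z p) ^ 2 = ‖f x‖ ^ 2 := hfx.symm
    _ ≤ (c * ‖x‖) ^ 2 := h2
    _ = c ^ 2 * ∑ j, (z j) ^ 2 := by rw [mul_pow, hxx]

lemma vor_specNorm_le {K k : ℕ} (W : Matrix (Fin K) (Fin k) ℝ) {c : ℝ} (hc : 0 ≤ c)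
    (h : ∀ z : Fin k → ℝ, (∑ j, (z j) ^ 2) = 1 → ∑ p, (W.mulVec z p) ^ 2 ≤ c ^ 2) :
    specNorm W ≤ c := by
  apply ContinuousLinearMap.opNorm_le_bound _ hc
  intro x
  rcases eq_or_ne x 0 with rfl | hx
  · simp
  · have hnx : (0:ℝ) < ‖x‖ := norm_pos_iff.mpr hx
    set z : Fin k → ℝ := fun j => ‖x‖⁻¹ * x j with hz
    have hz1 : (∑ j, (z j) ^ 2) = 1 := by
      have hxx : ‖x‖ ^ 2 = ∑ j, (x j) ^ 2 := vor_euclid_norm_sq _ x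
      simp only [hz, mul_pow, ← Finset.mul_sum, ← hxx]
      field_simp
    have h2 := h z hz1
    have hWz : ∀ p, W.mulVec z p = ‖x‖⁻¹ * W.mulVec (fun j => x j) p := by
      intro p
      simp only [Matrix.mulVec, dotProduct, hz, Finset.mul_sum]
      exact Finset.sum_congr rfl fun j _ => by ring
    have h3 : ∑ p, (W.mulVec (fun j => x j) p) ^ 2 ≤ c ^ 2 * ‖x‖ ^ 2 := by
      have : ∑ p, (W.mulVec z p) ^ 2
          = (‖x‖⁻¹) ^ 2 * ∑ p, (W.mulVec (fun j => x j) p) ^ 2 := by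
        rw [Finset.mul_sum]
        exact Finset.sum_congr rfl fun p _ => by rw [hWz p]; ring
      rw [this] at h2
      have := mul_le_mul_of_nonneg_left h2 (le_of_lt (pow_pos hnx 2))
      calc ∑ p, (W.mulVec (fun j => x j) p) ^ 2
          = ‖x‖ ^ 2 * ((‖x‖⁻¹) ^ 2 * ∑ p, (W.mulVec (fun j => x j) p) ^ 2) := by
            field_simp
        _ ≤ ‖x‖ ^ 2 * c ^ 2 := this
        _ = c ^ 2 * ‖x‖ ^ 2 := by ring
    have hcoe : ‖(LinearMap.toContinuousLinearMap (Matrix.toEuclideanLin W)) x‖ ^ 2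
        = ∑ p, (W.mulVec (fun j => x j) p) ^ 2 := by
      have : (LinearMap.toContinuousLinearMap (Matrix.toEuclideanLin W)) x
          = Matrix.toEuclideanLin W x := by simp
      rw [this, vor_norm_toEuclideanLin_sq]
    have h4 : ‖(LinearMap.toContinuousLinearMap (Matrix.toEuclideanLin W)) x‖ ^ 2
        ≤ (c * ‖x‖) ^ 2 := by
      rw [hcoe, mul_pow]
      exact h3
    exact (pow_le_pow_iff_left₀ (norm_nonneg _) (by positivity) two_ne_zero).mp h4

lemma vor_exists_ortho_ker {m n r : ℕ} (A : Matrix (Fin m) (Fin n) ℝ)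
    (hA : A.rank ≤ r) :
    ∃ x : Fin (n - r) → EuclideanSpace ℝ (Fin n),
      Orthonormal ℝ x ∧ ∀ i, A.mulVec (fun j => x i j) = 0 := by
  set f := Matrix.toEuclideanLin A with hfdef
  have hrange : A.rank = Module.finrank ℝ (LinearMap.range f) := by
    rw [Matrix.rank_eq_finrank_range_toLin A (PiLp.basisFun 2 ℝ (Fin m))
      (PiLp.basisFun 2 ℝ (Fin n))]
    rfl
  have hdim : Module.finrank ℝ (LinearMap.range f) + Module.finrank ℝ (LinearMap.ker f)
      = n := by
    rw [LinearMap.finrank_range_add_finrank_ker f, finrank_euclideanSpace_fin]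
  have hker : n - r ≤ Module.finrank ℝ (LinearMap.ker f) := by omega
  let ob := stdOrthonormalBasis ℝ (LinearMap.ker f)
  refine ⟨fun i => ((ob ⟨(i : ℕ), by omega⟩ : LinearMap.ker f) : EuclideanSpace ℝ (Fin n)),
    ?_, ?_⟩
  · have h1 : Orthonormal ℝ (fun i => ((LinearMap.ker f).subtypeₗᵢ) (ob i)) :=
      ob.orthonormal.comp_linearIsometry _
    exact h1.comp (fun i : Fin (n - r) => (⟨(i : ℕ), by omega⟩ : Fin _))
      (fun a b hab => by
        apply Fin.ext
        have := congrArg (fun t : Fin _ => (t : ℕ)) hab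
        simpa using this)
  · intro i
    have hmem := (ob ⟨(i : ℕ), by omega⟩).2
    rw [LinearMap.mem_ker] at hmem
    have : A.mulVec (fun j => ((ob ⟨(i : ℕ), by omega⟩ : LinearMap.ker f)
        : EuclideanSpace ℝ (Fin n)) j)
        = WithLp.equiv 2 (Fin m → ℝ) (f ((ob ⟨(i : ℕ), by omega⟩ : LinearMap.ker f)
        : EuclideanSpace ℝ (Fin n))) := rfl
    rw [this, hmem, WithLp.equiv_apply, WithLp.ofLp_zero]

lemma vor_mpr {m n r : ℕ} (hr : 1 ≤ r) (hrm : r ≤ m) (hrn : r ≤ n)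
    (v : Fin r → ℝ) (hv : ∀ i j : Fin r, i ≤ j → v j ≤ v i) (hvpos : ∀ i, 0 < v i)
    (V : Matrix (Fin m) (Fin n) ℝ)
    (hV : ∀ i j, V i j = if h : (i : ℕ) = (j : ℕ) ∧ (i : ℕ) < r then v ⟨i, h.2⟩ else 0)
    (U : Matrix (Fin m) (Fin n) ℝ)
    (hcross : ∀ (i : Fin m) (j : Fin n), ((i : ℕ) < r ∨ (j : ℕ) < r) → U i j = V i j)
    (W : Matrix (Fin (m - r)) (Fin (n - r)) ℝ)
    (hWU : ∀ p q, W p q = U ⟨r + p, Nat.lt_sub_iff_add_lt'.mp p.isLt⟩ ⟨r + q, Nat.lt_sub_iff_add_lt'.mp q.isLt⟩)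
    (hspec : specNorm W ≤ v ⟨r - 1, Nat.sub_lt hr Nat.one_pos⟩)
    (A : Matrix (Fin m) (Fin n) ℝ) (hA : A.rank ≤ r) :
    ∑ i, ∑ j, ((U - V) i j) ^ 2 ≤ ∑ i, ∑ j, ((U - A) i j) ^ 2 := by
  classical
  set c : ℝ := v ⟨r - 1, Nat.sub_lt hr Nat.one_pos⟩ with hcdef
  have hc : 0 < c := hvpos _
  -- U - V is supported on the lower-right block, equal to W there
  have hUV : ∀ (i : Fin m) (j : Fin n), (U - V) i j
      = if h : r ≤ (i : ℕ) ∧ r ≤ (j : ℕ)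
        then W ⟨(i : ℕ) - r, by omega⟩ ⟨(j : ℕ) - r, by omega⟩ else 0 := by
    intro i j
    by_cases h : r ≤ (i : ℕ) ∧ r ≤ (j : ℕ)
    · rw [dif_pos h, hWU]
      have hVij : V i j = 0 := by rw [hV]; rw [dif_neg]; omega
      have : U i j = U ⟨r + ((i : ℕ) - r), by omega⟩ ⟨r + ((j : ℕ) - r), by omega⟩ := by
        congr 1 <;> (apply Fin.ext; simp <;> omega)
      simp [Matrix.sub_apply, hVij, ← this]
    · rw [dif_neg h]
      have : U i j = V i j := hcross i j (by omega)
      simp [Matrix.sub_apply, this]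
  have hfsqUV : ∑ i, ∑ j, ((U - V) i j) ^ 2 = ∑ p, ∑ q, (W p q) ^ 2 := by
    rw [vor_sum_split hrm]
    have hz : (∑ i : Fin r, ∑ j : Fin n, ((U - V) ⟨(i:ℕ), by omega⟩ j) ^ 2) = 0 := by
      apply Finset.sum_eq_zero; intro i _
      apply Finset.sum_eq_zero; intro j _
      rw [hUV]
      rw [dif_neg (by simp <;> omega)]
      simp
    rw [hz, zero_add]
    apply Finset.sum_congr rfl
    intro p _
    rw [vor_sum_split hrn]
    have hz2 : (∑ j : Fin r, ((U - V) ⟨r + (p:ℕ), by omega⟩ ⟨(j:ℕ), by omega⟩) ^ 2) = 0 := by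
      apply Finset.sum_eq_zero; intro j _
      rw [hUV, dif_neg (by simp <;> omega)]
      simp
    rw [hz2, zero_add]
    apply Finset.sum_congr rfl
    intro q _
    rw [hUV, dif_pos (by simp [le_add_iff_nonneg_right])]
    congr 2 <;> (try (apply Fin.ext; simp))
  -- orthonormal kernel family
  obtain ⟨x, hxon, hxker⟩ := vor_exists_ortho_ker A hA
  set g : Fin (n - r) → Fin n := fun p => ⟨r + (p : ℕ), Nat.lt_sub_iff_add_lt'.mp p.isLt⟩ with hgdef
  have hg : Function.Injective g := by
    intro a b hab
    apply Fin.ext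
    have : r + (a : ℕ) = r + (b : ℕ) := congrArg (fun t : Fin n => (t : ℕ)) hab
    omega
  set B : Matrix (Fin (n - r)) (Fin (n - r)) ℝ := Matrix.of fun p i => x i (g p) with hBdef
  have hBpsd : (1 - B * Bᵀ).PosSemidef :=
    vor_one_sub_BBt_posSemidef g hg x hxon B (fun p i => rfl)
  have hcentral := vor_central W c (fun z => vor_specNorm_quad W hspec z) B hBpsd
  -- row computation for U *ᵥ x i
  have hrow1 : ∀ (i : Fin (n - r)) (p : Fin r),
      U.mulVec (x i) ⟨(p : ℕ), by omega⟩ = v p * x i ⟨(p : ℕ), by omega⟩ := by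
    intro i p
    simp only [Matrix.mulVec, dotProduct]
    rw [Finset.sum_eq_single (⟨(p : ℕ), by omega⟩ : Fin n)]
    · rw [hcross _ _ (by simp <;> omega), hV, dif_pos (by simp <;> omega)]
    · intro b _ hb
      rw [hcross _ _ (by simp <;> omega), hV, dif_neg, zero_mul]
      simp only [not_and]
      intro hc'
      exfalso; apply hb; apply Fin.ext; simp at hc' ⊢; omega
    · simp
  have hrow2 : ∀ (i : Fin (n - r)) (p : Fin (m - r)),
      U.mulVec (x i) ⟨r + (p : ℕ), Nat.lt_sub_iff_add_lt'.mp p.isLt⟩ = W.mulVec (fun q => B q i) p := by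
    intro i p
    simp only [Matrix.mulVec, dotProduct]
    rw [vor_sum_split hrn]
    have hz : (∑ j : Fin r, U ⟨r + (p : ℕ), Nat.lt_sub_iff_add_lt'.mp p.isLt⟩ ⟨(j : ℕ), by omega⟩
        * x i ⟨(j : ℕ), by omega⟩) = 0 := by
      apply Finset.sum_eq_zero; intro j _
      rw [hcross _ _ (by simp <;> omega), hV, dif_neg (by simp <;> omega), zero_mul]
    rw [hz, zero_add]
    apply Finset.sum_congr rfl
    intro q _
    rw [hWU]
    congr 1
  -- per-vector lower bound
  have hvec : ∀ i : Fin (n - r), c ^ 2 * (1 - ∑ q, (B q i) ^ 2)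
      + ∑ p : Fin (m - r), (W.mulVec (fun q => B q i) p) ^ 2
      ≤ ∑ p : Fin m, (U.mulVec (x i) p) ^ 2 := by
    intro i
    rw [vor_sum_split hrm (fun p => (U.mulVec (x i) p) ^ 2)]
    have hnorm1 : ∑ j : Fin n, (x i j) ^ 2 = 1 := by
      have := hxon.1 i
      rw [← vor_euclid_norm_sq n (x i), this, one_pow]
    have hsplitx : (∑ j : Fin r, (x i ⟨(j : ℕ), by omega⟩) ^ 2)
        = 1 - ∑ q, (B q i) ^ 2 := by
      rw [← hnorm1, vor_sum_split hrn (fun j => (x i j) ^ 2)]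
      simp only [hBdef, Matrix.of_apply, hgdef]
      ring
    have h1 : c ^ 2 * (1 - ∑ q, (B q i) ^ 2)
        ≤ ∑ p : Fin r, (U.mulVec (x i) ⟨(p : ℕ), by omega⟩) ^ 2 := by
      rw [← hsplitx, Finset.mul_sum]
      apply Finset.sum_le_sum
      intro p _
      rw [hrow1 i p, mul_pow]
      apply mul_le_mul_of_nonneg_right _ (sq_nonneg _)
      have hvp : c ≤ v p := hv p ⟨r - 1, Nat.sub_lt hr Nat.one_pos⟩ (by simp [Fin.le_def] <;> omega)
      exact pow_le_pow_left₀ (le_of_lt hc) hvp 2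
    have h2 : (∑ p : Fin (m - r), (W.mulVec (fun q => B q i) p) ^ 2)
        = ∑ p : Fin (m - r), (U.mulVec (x i) ⟨r + (p : ℕ), Nat.lt_sub_iff_add_lt'.mp p.isLt⟩) ^ 2 := by
      apply Finset.sum_congr rfl
      intro p _
      rw [hrow2 i p]
    rw [← h2]
    exact add_le_add h1 (le_refl _)
  -- combine
  have hbessel := vor_bessel_rows (U - A) x hxon
  have hUA : ∀ i : Fin (n - r), (U - A).mulVec (x i) = U.mulVec (x i) := by
    intro i
    rw [Matrix.sub_mulVec, hxker i, sub_zero]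
  calc ∑ i, ∑ j, ((U - V) i j) ^ 2 = ∑ p, ∑ q, (W p q) ^ 2 := hfsqUV
    _ ≤ c ^ 2 * ((n - r : ℕ) - ∑ i, ∑ q, (B q i) ^ 2)
        + ∑ i, ∑ p, (W.mulVec (fun q => B q i) p) ^ 2 := hcentral
    _ = ∑ i : Fin (n - r), (c ^ 2 * (1 - ∑ q, (B q i) ^ 2)
        + ∑ p : Fin (m - r), (W.mulVec (fun q => B q i) p) ^ 2) := by
      rw [Finset.sum_add_distrib, ← Finset.mul_sum]
      congr 2
      rw [Finset.sum_sub_distrib]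
      simp
    _ ≤ ∑ i : Fin (n - r), ∑ p : Fin m, (U.mulVec (x i) p) ^ 2 :=
      Finset.sum_le_sum (fun i _ => hvec i)
    _ = ∑ i : Fin (n - r), ∑ p : Fin m, ((U - A).mulVec (x i) p) ^ 2 := by
      apply Finset.sum_congr rfl
      intro i _
      rw [hUA i]
    _ ≤ ∑ p, ∑ j, ((U - A) p j) ^ 2 := hbessel

lemma vor_fsq_UV {m n r : ℕ} (hrm : r ≤ m) (hrn : r ≤ n) (v : Fin r → ℝ)
    (V : Matrix (Fin m) (Fin n) ℝ)
    (hV : ∀ i j, V i j = if h : (i : ℕ) = (j : ℕ) ∧ (i : ℕ) < r then v ⟨i, h.2⟩ else 0)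
    (U : Matrix (Fin m) (Fin n) ℝ)
    (hcross : ∀ (i : Fin m) (j : Fin n), ((i : ℕ) < r ∨ (j : ℕ) < r) → U i j = V i j)
    (W : Matrix (Fin (m - r)) (Fin (n - r)) ℝ)
    (hWU : ∀ p q, W p q = U ⟨r + p, Nat.lt_sub_iff_add_lt'.mp p.isLt⟩ ⟨r + q, Nat.lt_sub_iff_add_lt'.mp q.isLt⟩) :
    ∑ i, ∑ j, ((U - V) i j) ^ 2 = ∑ p, ∑ q, (W p q) ^ 2 := by
  have hUV : ∀ (i : Fin m) (j : Fin n), (U - V) i j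
      = if h : r ≤ (i : ℕ) ∧ r ≤ (j : ℕ)
        then W ⟨(i : ℕ) - r, by omega⟩ ⟨(j : ℕ) - r, by omega⟩ else 0 := by
    intro i j
    by_cases h : r ≤ (i : ℕ) ∧ r ≤ (j : ℕ)
    · rw [dif_pos h, hWU]
      have hVij : V i j = 0 := by rw [hV]; rw [dif_neg]; omega
      have : U i j = U ⟨r + ((i : ℕ) - r), by omega⟩ ⟨r + ((j : ℕ) - r), by omega⟩ := by
        congr 1 <;> (apply Fin.ext; simp <;> omega)
      simp [Matrix.sub_apply, hVij, ← this]
    · rw [dif_neg h]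
      have : U i j = V i j := hcross i j (by omega)
      simp [Matrix.sub_apply, this]
  rw [vor_sum_split hrm]
  have hz : (∑ i : Fin r, ∑ j : Fin n, ((U - V) ⟨(i:ℕ), by omega⟩ j) ^ 2) = 0 := by
    apply Finset.sum_eq_zero; intro i _
    apply Finset.sum_eq_zero; intro j _
    rw [hUV]
    rw [dif_neg (by simp <;> omega)]
    simp
  rw [hz, zero_add]
  apply Finset.sum_congr rfl
  intro p _
  rw [vor_sum_split hrn]
  have hz2 : (∑ j : Fin r, ((U - V) ⟨r + (p:ℕ), by omega⟩ ⟨(j:ℕ), by omega⟩) ^ 2) = 0 := by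
    apply Finset.sum_eq_zero; intro j _
    rw [hUV, dif_neg (by simp <;> omega)]
    simp
  rw [hz2, zero_add]
  apply Finset.sum_congr rfl
  intro q _
  rw [hUV, dif_pos (by simp [le_add_iff_nonneg_right])]
  congr 2 <;> (try (apply Fin.ext; simp))

lemma vor_mp_cross {m n r : ℕ} (hrm : r ≤ m) (hrn : r ≤ n) (v : Fin r → ℝ)
    (V : Matrix (Fin m) (Fin n) ℝ)
    (hV : ∀ i j, V i j = if h : (i : ℕ) = (j : ℕ) ∧ (i : ℕ) < r then v ⟨i, h.2⟩ else 0)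
    (U : Matrix (Fin m) (Fin n) ℝ)
    (hvor : ∀ A : Matrix (Fin m) (Fin n) ℝ, A.rank ≤ r →
      ∑ i, ∑ j, ((U - V) i j) ^ 2 ≤ ∑ i, ∑ j, ((U - A) i j) ^ 2)
    (i0 : Fin m) (j0 : Fin n) (h0 : (i0 : ℕ) < r ∨ (j0 : ℕ) < r) : U i0 j0 = V i0 j0 := by
  classical
  set A : Matrix (Fin m) (Fin n) ℝ :=
    Matrix.of fun i j => if i = i0 ∧ j = j0 then U i0 j0 else V i j with hAdef
  set c0 : ℝ := U i0 j0 - V i0 j0 with hc0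
  have hVz : ∀ (i : Fin m) (j : Fin n), r ≤ (i : ℕ) ∨ r ≤ (j : ℕ) → V i j = 0 := by
    intro i j hij
    rw [hV, dif_neg]; omega
  have hrank : A.rank ≤ r := by
    rcases h0 with h0 | h0
    · apply vor_rank_le_of_row_support hrm
      intro i j hi
      have : ¬(i = i0 ∧ j = j0) := by
        rintro ⟨rfl, rfl⟩; omega
      simp only [hAdef, Matrix.of_apply, if_neg this]
      exact hVz i j (Or.inl hi)
    · apply vor_rank_le_of_col_support hrn
      intro i j hj
      have : ¬(i = i0 ∧ j = j0) := by
        rintro ⟨rfl, rfl⟩; omega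
      simp only [hAdef, Matrix.of_apply, if_neg this]
      exact hVz i j (Or.inr hj)
  have hterm : ∀ (i : Fin m) (j : Fin n),
      ((U - A) i j) ^ 2 = ((U - V) i j) ^ 2 - (if i = i0 ∧ j = j0 then c0 ^ 2 else 0) := by
    intro i j
    by_cases hij : i = i0 ∧ j = j0
    · obtain ⟨rfl, rfl⟩ := hij
      simp [hAdef, hc0]
    · simp [hAdef, Matrix.sub_apply, hij]
  have hone : (∑ i : Fin m, ∑ j : Fin n, (if i = i0 ∧ j = j0 then c0 ^ 2 else 0)) = c0 ^ 2 := by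
    have hin : ∀ i : Fin m, (∑ j, if i = i0 ∧ j = j0 then c0 ^ 2 else 0)
        = if i = i0 then c0 ^ 2 else 0 := by
      intro i
      by_cases hi : i = i0
      · subst hi
        simp
      · simp [hi]
    rw [Finset.sum_congr rfl (fun i _ => hin i)]
    simp
  have hsum : ∑ i, ∑ j, ((U - A) i j) ^ 2
      = (∑ i, ∑ j, ((U - V) i j) ^ 2) - c0 ^ 2 := by
    simp only [hterm]
    rw [Finset.sum_congr rfl (fun i (_ : i ∈ Finset.univ) => Finset.sum_sub_distrib _ _),
      Finset.sum_sub_distrib, hone]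
  have h := hvor A hrank
  rw [hsum] at h
  have hc2 : c0 ^ 2 ≤ 0 := by linarith
  have hc0z : c0 = 0 := by nlinarith [sq_nonneg c0]
  have := sub_eq_zero.mp hc0z
  exact this

lemma vor_rank_add_le {m n : ℕ} (A B : Matrix (Fin m) (Fin n) ℝ) :
    (A + B).rank ≤ A.rank + B.rank := by
  have h : LinearMap.range (A + B).mulVecLin
      ≤ LinearMap.range A.mulVecLin ⊔ LinearMap.range B.mulVecLin := by
    rintro _ ⟨x, rfl⟩
    rw [Matrix.mulVecLin_add]
    exact Submodule.add_mem_sup (LinearMap.mem_range_self _ x) (LinearMap.mem_range_self _ x)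
  calc (A + B).rank ≤ Module.finrank ℝ ↥(LinearMap.range A.mulVecLin ⊔ LinearMap.range B.mulVecLin) := Submodule.finrank_mono h
    _ ≤ A.rank + B.rank := Submodule.finrank_add_le_finrank_add_finrank _ _

lemma vor_rank_outer {m n : ℕ} (y : Fin m → ℝ) (z : Fin n → ℝ) :
    (Matrix.of fun i j => y i * z j).rank ≤ 1 := by
  have hfact : (Matrix.of fun i j => y i * z j)
      = (Matrix.of fun i (_ : Fin 1) => y i) * (Matrix.of fun (_ : Fin 1) j => z j) := by
    ext i j
    rw [Matrix.mul_apply]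
    simp
  rw [hfact]
  exact le_trans (Matrix.rank_mul_le_right _ _)
    (le_trans (Matrix.rank_le_card_height _) (by simp))

lemma vor_mp_spec {m n r : ℕ} (hr : 1 ≤ r) (hrm : r ≤ m) (hrn : r ≤ n)
    (v : Fin r → ℝ) (hvpos : ∀ i, 0 < v i)
    (V : Matrix (Fin m) (Fin n) ℝ)
    (hV : ∀ i j, V i j = if h : (i : ℕ) = (j : ℕ) ∧ (i : ℕ) < r then v ⟨i, h.2⟩ else 0)
    (U : Matrix (Fin m) (Fin n) ℝ)
    (hvor : ∀ A : Matrix (Fin m) (Fin n) ℝ, A.rank ≤ r →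
      ∑ i, ∑ j, ((U - V) i j) ^ 2 ≤ ∑ i, ∑ j, ((U - A) i j) ^ 2)
    (hcross : ∀ (i : Fin m) (j : Fin n), ((i : ℕ) < r ∨ (j : ℕ) < r) → U i j = V i j)
    (W : Matrix (Fin (m - r)) (Fin (n - r)) ℝ)
    (hWU : ∀ p q, W p q = U ⟨r + p, Nat.lt_sub_iff_add_lt'.mp p.isLt⟩ ⟨r + q, Nat.lt_sub_iff_add_lt'.mp q.isLt⟩) :
    specNorm W ≤ v ⟨r - 1, Nat.sub_lt hr Nat.one_pos⟩ := by
  classical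
  set c : ℝ := v ⟨r - 1, Nat.sub_lt hr Nat.one_pos⟩ with hcdef
  have hc : 0 < c := hvpos _
  apply vor_specNorm_le W hc.le
  intro z hz1
  set t : ℝ := ∑ p, (W.mulVec z p) ^ 2 with htdef
  show t ≤ c ^ 2
  have ht0 : 0 ≤ t := by positivity
  rcases eq_or_lt_of_le ht0 with ht | ht
  · rw [← ht]; positivity
  set s : ℝ := Real.sqrt t with hsdef
  have hs : 0 < s := Real.sqrt_pos.mpr ht
  have hs2 : s ^ 2 = t := Real.sq_sqrt ht0
  set y : Fin (m - r) → ℝ := fun p => s⁻¹ * W.mulVec z p with hydef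
  have hy2 : ∑ p, (y p) ^ 2 = 1 := by
    simp only [hydef, mul_pow, ← Finset.mul_sum, ← htdef]
    rw [← hs2]
    field_simp
  have hyu : ∑ p, y p * W.mulVec z p = s := by
    have h1 : ∑ p, y p * W.mulVec z p = s⁻¹ * t := by
      rw [htdef, Finset.mul_sum]
      apply Finset.sum_congr rfl
      intro p _
      rw [hydef]
      ring
    rw [h1, ← hs2, pow_two, inv_mul_cancel_left₀ hs.ne']
  set yh : Fin m → ℝ := fun i => if h : r ≤ (i : ℕ) then y ⟨(i : ℕ) - r, by omega⟩ else 0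
    with hyhdef
  set zh : Fin n → ℝ := fun j => if h : r ≤ (j : ℕ) then z ⟨(j : ℕ) - r, by omega⟩ else 0
    with hzhdef
  set A1 : Matrix (Fin m) (Fin n) ℝ := Matrix.of fun i j =>
    if (i : ℕ) = (j : ℕ) ∧ (i : ℕ) < r - 1 then V i j else 0 with hA1def
  set A2 : Matrix (Fin m) (Fin n) ℝ := Matrix.of fun i j => (s * yh i) * zh j with hA2def
  set A : Matrix (Fin m) (Fin n) ℝ := A1 + A2 with hAdef
  have hrank : A.rank ≤ r := by
    have h1 : A1.rank ≤ r - 1 := by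
      apply vor_rank_le_of_row_support (by omega)
      intro i j hi
      simp only [hA1def, Matrix.of_apply]
      rw [if_neg]
      omega
    have h2 : A2.rank ≤ 1 := vor_rank_outer _ _
    calc A.rank ≤ A1.rank + A2.rank := vor_rank_add_le _ _
      _ ≤ (r - 1) + 1 := add_le_add h1 h2
      _ = r := by omega
  have h := hvor A hrank
  rw [vor_fsq_UV hrm hrn v V hV U hcross W hWU] at h
  -- compute fsq (U - A)
  have hUA : ∑ i, ∑ j, ((U - A) i j) ^ 2 = c ^ 2 + ((∑ p, ∑ q, (W p q) ^ 2) - t) := by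
    rw [vor_sum_split hrm]
    -- top rows
    have htop : (∑ i : Fin r, ∑ j : Fin n, ((U - A) ⟨(i : ℕ), by omega⟩ j) ^ 2) = c ^ 2 := by
      have hrow : ∀ (i : Fin r) (j : Fin n), (U - A) ⟨(i : ℕ), by omega⟩ j
          = if (i : ℕ) = (j : ℕ) ∧ (i : ℕ) = r - 1 then c else 0 := by
        intro i j
        have hcr : U ⟨(i : ℕ), by omega⟩ j = V ⟨(i : ℕ), by omega⟩ j :=
          hcross _ _ (by simp <;> omega)
        have hyh0 : yh ⟨(i : ℕ), by omega⟩ = 0 := by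
          simp only [hyhdef]; exact dif_neg (by simp <;> omega)
        simp only [Matrix.sub_apply, hAdef, Matrix.add_apply, hA1def, hA2def,
          Matrix.of_apply, hyh0, mul_zero, zero_mul, add_zero, hcr]
        by_cases h1 : (i : ℕ) = (j : ℕ) ∧ (i : ℕ) < r - 1
        · rw [if_pos (by simpa using h1), if_neg (by omega), sub_self]
        · rw [if_neg (by simpa using h1)]
          by_cases h2 : (i : ℕ) = (j : ℕ) ∧ (i : ℕ) = r - 1
          · rw [if_pos h2, sub_zero, hV, dif_pos (by simp <;> omega), hcdef]
            congr 1
            apply Fin.ext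
            simp <;> omega
          · rw [if_neg h2, sub_zero, hV, dif_neg]
            intro hij
            simp only [Fin.val_mk] at hij
            simp only [not_and] at h1 h2
            omega
      calc (∑ i : Fin r, ∑ j : Fin n, ((U - A) ⟨(i : ℕ), by omega⟩ j) ^ 2)
          = ∑ i : Fin r, (if (i : ℕ) = r - 1 then c ^ 2 else 0) := by
            apply Finset.sum_congr rfl
            intro i _
            rw [Finset.sum_eq_single (⟨(i : ℕ), by omega⟩ : Fin n)]
            · rw [hrow]
              by_cases h2 : (i : ℕ) = r - 1
              · rw [if_pos (by simp [h2]), if_pos h2]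
              · rw [if_neg (by simp [h2]), if_neg h2, zero_pow two_ne_zero]
            · intro b _ hb
              rw [hrow, if_neg, zero_pow two_ne_zero]
              rintro ⟨h1, -⟩
              apply hb
              apply Fin.ext
              simp at h1 ⊢
              omega
            · simp
        _ = c ^ 2 := by
            rw [Finset.sum_eq_single (⟨r - 1, Nat.sub_lt hr Nat.one_pos⟩ : Fin r)]
            · rw [if_pos (by simp)]
            · intro b _ hb
              rw [if_neg]
              intro hb2
              apply hb; apply Fin.ext; simpa using hb2
            · simp
    rw [htop]
    -- bottom rows
    have hbot : (∑ p : Fin (m - r), ∑ j : Fin n, ((U - A) ⟨r + (p : ℕ), Nat.lt_sub_iff_add_lt'.mp p.isLt⟩ j) ^ 2)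
        = (∑ p, ∑ q, (W p q) ^ 2) - t := by
      have hrowsum : ∀ p : Fin (m - r), (∑ j : Fin n, ((U - A) ⟨r + (p : ℕ), Nat.lt_sub_iff_add_lt'.mp p.isLt⟩ j) ^ 2)
          = ∑ q : Fin (n - r), (W p q - s * y p * z q) ^ 2 := by
        intro p
        rw [vor_sum_split hrn]
        have hz0 : (∑ j : Fin r, ((U - A) ⟨r + (p : ℕ), Nat.lt_sub_iff_add_lt'.mp p.isLt⟩ ⟨(j : ℕ), by omega⟩) ^ 2)
            = 0 := by
          apply Finset.sum_eq_zero
          intro j _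
          have hzh0 : zh ⟨(j : ℕ), by omega⟩ = 0 := by
            simp only [hzhdef]; exact dif_neg (by simp <;> omega)
          have hcr : U ⟨r + (p : ℕ), Nat.lt_sub_iff_add_lt'.mp p.isLt⟩ ⟨(j : ℕ), by omega⟩
              = V ⟨r + (p : ℕ), Nat.lt_sub_iff_add_lt'.mp p.isLt⟩ ⟨(j : ℕ), by omega⟩ :=
            hcross _ _ (by simp <;> omega)
          simp only [Matrix.sub_apply, hAdef, Matrix.add_apply, hA1def, hA2def,
            Matrix.of_apply, hzh0, mul_zero, add_zero, hcr]
          rw [if_neg (by simp <;> omega), hV, dif_neg (by simp <;> omega)]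
          simp
        rw [hz0, zero_add]
        apply Finset.sum_congr rfl
        intro q _
        have hWpq : U ⟨r + (p : ℕ), Nat.lt_sub_iff_add_lt'.mp p.isLt⟩ ⟨r + (q : ℕ), Nat.lt_sub_iff_add_lt'.mp q.isLt⟩ = W p q := by
          rw [hWU]
        have hyhp : yh ⟨r + (p : ℕ), Nat.lt_sub_iff_add_lt'.mp p.isLt⟩ = y p := by
          simp only [hyhdef]
          rw [dif_pos (by simp <;> omega)]
          congr 1
          apply Fin.ext
          simp
        have hzhq : zh ⟨r + (q : ℕ), Nat.lt_sub_iff_add_lt'.mp q.isLt⟩ = z q := by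
          simp only [hzhdef]
          rw [dif_pos (by simp <;> omega)]
          congr 1
          apply Fin.ext
          simp
        simp only [Matrix.sub_apply, hAdef, Matrix.add_apply, hA1def, hA2def,
          Matrix.of_apply, hyhp, hzhq, hWpq]
        rw [if_neg (by simp <;> omega)]
        ring_nf
      rw [Finset.sum_congr rfl (fun p _ => hrowsum p)]
      -- expand the square
      have hexp : ∀ p : Fin (m - r), (∑ q, (W p q - s * y p * z q) ^ 2)
          = (∑ q, (W p q) ^ 2) - 2 * s * (y p * W.mulVec z p)
            + s ^ 2 * ((y p) ^ 2 * ∑ q, (z q) ^ 2) := by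
        intro p
        have hmv : W.mulVec z p = ∑ q, W p q * z q := rfl
        rw [hmv]
        simp only [Finset.mul_sum, ← Finset.sum_sub_distrib, ← Finset.sum_add_distrib]
        apply Finset.sum_congr rfl
        intro q _
        ring
      rw [Finset.sum_congr rfl (fun p _ => hexp p)]
      rw [Finset.sum_add_distrib, Finset.sum_sub_distrib, ← Finset.mul_sum, ← Finset.mul_sum]
      rw [hyu]
      have : (∑ p : Fin (m - r), (y p) ^ 2 * ∑ q, (z q) ^ 2) = 1 := by
        rw [← Finset.sum_mul, hy2, hz1, one_mul]
      rw [this, hs2, ← hs2]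
      ring
    rw [hbot]
    try ring
  rw [hUA] at h
  linarith


/-- Description of the Voronoi cell of the rank `≤ r` variety at the
diagonal matrix `V = diag(v₁,…,v_r,0,…,0)` with `v₁ ≥ ⋯ ≥ v_r > 0`:
`U ∈ Vor_X(V)` (Frobenius norm) iff `U` agrees with `V` in all entries whose row or
column index is `≤ r`, and the lower-right `(m−r)×(n−r)` block of `U` has spectral
norm at most `v_r`. -/
theorem voronoi_cell_low_rank (m n r : ℕ) (hr : 1 ≤ r) (hrm : r ≤ m) (hrn : r ≤ n)
    (v : Fin r → ℝ) (hv : ∀ i j : Fin r, i ≤ j → v j ≤ v i) (hvpos : ∀ i, 0 < v i)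
    (V : Matrix (Fin m) (Fin n) ℝ)
    (hV : ∀ i j, V i j = if h : (i : ℕ) = (j : ℕ) ∧ (i : ℕ) < r then v ⟨i, h.2⟩ else 0)
    (U : Matrix (Fin m) (Fin n) ℝ) :
    (∀ A : Matrix (Fin m) (Fin n) ℝ, A.rank ≤ r → frobNorm (U - V) ≤ frobNorm (U - A))
    ↔ ((∀ (i : Fin m) (j : Fin n), ((i : ℕ) < r ∨ (j : ℕ) < r) → U i j = V i j) ∧
        specNorm (Matrix.of fun (i : Fin (m - r)) (j : Fin (n - r)) =>
          U ⟨r + i, by omega⟩ ⟨r + j, by omega⟩) ≤ v ⟨r - 1, by omega⟩) := by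
  have hfs : ∀ X Y : Matrix (Fin m) (Fin n) ℝ,
      (frobNorm X ≤ frobNorm Y ↔ ∑ i, ∑ j, (X i j) ^ 2 ≤ ∑ i, ∑ j, (Y i j) ^ 2) := by
    intro X Y
    unfold frobNorm
    constructor
    · intro h
      have hX : (0:ℝ) ≤ ∑ i, ∑ j, (X i j) ^ 2 := by positivity
      have hY : (0:ℝ) ≤ ∑ i, ∑ j, (Y i j) ^ 2 := by positivity
      calc ∑ i, ∑ j, (X i j) ^ 2 = Real.sqrt (∑ i, ∑ j, (X i j) ^ 2) ^ 2 :=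
            (Real.sq_sqrt hX).symm
        _ ≤ Real.sqrt (∑ i, ∑ j, (Y i j) ^ 2) ^ 2 :=
            pow_le_pow_left₀ (Real.sqrt_nonneg _) h 2
        _ = ∑ i, ∑ j, (Y i j) ^ 2 := Real.sq_sqrt hY
    · exact fun h => Real.sqrt_le_sqrt h
  constructor
  · intro h
    have hvor : ∀ A : Matrix (Fin m) (Fin n) ℝ, A.rank ≤ r →
        ∑ i, ∑ j, ((U - V) i j) ^ 2 ≤ ∑ i, ∑ j, ((U - A) i j) ^ 2 :=
      fun A hA => (hfs _ _).mp (h A hA)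
    have hcross : ∀ (i : Fin m) (j : Fin n), ((i : ℕ) < r ∨ (j : ℕ) < r) → U i j = V i j :=
      fun i j hij => vor_mp_cross hrm hrn v V hV U hvor i j hij
    refine ⟨hcross, ?_⟩
    exact vor_mp_spec hr hrm hrn v hvpos V hV U hvor hcross _ (fun p q => rfl)
  · rintro ⟨hcross, hspec⟩ A hA
    apply (hfs _ _).mpr
    exact vor_mpr hr hrm hrn v hv hvpos V hV U hcross _ (fun p q => rfl) hspec A hA
end

section
/- Fix integers n and r with 1 ≤ r ≤ n, and let X = {x ∈ ℝⁿ : x has at most r nonzero coordinates} (the union of the r-dimensional coordinate subspaces). Let S ⊆ {1,…,n} with |S| = r, and let y ∈ ℝⁿ with yᵢ ≠ 0 for all i ∈ S and yⱼ = 0 for all j ∉ S. Then u ∈ Vor_X(y) (with respect to the Euclidean norm) if and only if uᵢ = yᵢ for all i ∈ S and |uⱼ| ≤ min_{i∈S} |yᵢ| for all j ∉ S. In particular, Vor_X(y) is congruent to a regular cube of dimension n − r, the unit ball of the L^∞-norm on ℝ^{n−r} scaled by min_{i∈S} |yᵢ|. -/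
open Finset

private lemma normsub_le_iff {n : ℕ} (u a b : EuclideanSpace ℝ (Fin n)) :
    ‖u - a‖ ≤ ‖u - b‖ ↔ ∑ i, (u i - a i)^2 ≤ ∑ i, (u i - b i)^2 := by
  rw [EuclideanSpace.norm_eq, EuclideanSpace.norm_eq,
    Real.sqrt_le_sqrt_iff (by positivity)]
  simp [Real.norm_eq_abs, sq_abs]

/-- Let `X ⊆ ℝⁿ` be the set of vectors with at most `r` nonzero
coordinates, `S` a set of `r` coordinates, and `y` a vector supported exactly on `S`.
Then `u ∈ Vor_X(y)` (Euclidean norm) iff `u` agrees with `y` on `S` and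
`|uⱼ| ≤ minᵢ∈S |yᵢ|` for all `j ∉ S`; i.e. the Voronoi cell is a regular cube,
congruent to the `L^∞` unit ball of `ℝ^{n−r}` scaled by `minᵢ∈S |yᵢ|`. -/
theorem voronoi_cell_sparse_vectors (n r : ℕ) (hr : 1 ≤ r) (hrn : r ≤ n)
    (X : Set (EuclideanSpace ℝ (Fin n)))
    (hX : X = {x | ∃ T : Finset (Fin n), T.card ≤ r ∧ ∀ i ∉ T, x i = 0})
    (S : Finset (Fin n)) (hS : S.card = r)
    (y : EuclideanSpace ℝ (Fin n))
    (hyS : ∀ i ∈ S, y i ≠ 0) (hyc : ∀ j ∉ S, y j = 0)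
    (u : EuclideanSpace ℝ (Fin n)) :
    (∀ x ∈ X, ‖u - y‖ ≤ ‖u - x‖)
    ↔ ((∀ i ∈ S, u i = y i) ∧
        ∀ j ∉ S, |u j| ≤ S.inf' (Finset.card_pos.mp (by omega)) fun i => |y i|) := by
  subst hX
  have hSne : S.Nonempty := Finset.card_pos.mp (by omega)
  show (∀ x ∈ {x : EuclideanSpace ℝ (Fin n) |
        ∃ T : Finset (Fin n), T.card ≤ r ∧ ∀ i ∉ T, x i = 0}, ‖u - y‖ ≤ ‖u - x‖)
    ↔ ((∀ i ∈ S, u i = y i) ∧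
        ∀ j ∉ S, |u j| ≤ S.inf' hSne fun i => |y i|)
  constructor
  · intro h
    -- first: u agrees with y on S
    have hu : ∀ i ∈ S, u i = y i := by
      intro i hi
      classical
      set x : EuclideanSpace ℝ (Fin n) := (WithLp.toLp 2 (fun k => if k = i then u i else y k)) with hxdef
      have hxX : x ∈ {x : EuclideanSpace ℝ (Fin n) |
          ∃ T : Finset (Fin n), T.card ≤ r ∧ ∀ i ∉ T, x i = 0} := by
        refine ⟨S, by omega, fun k hk => ?_⟩
        have hki : k ≠ i := fun h' => hk (h' ▸ hi)
        simp only [hxdef, PiLp.toLp_apply, if_neg hki]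
        exact hyc k hk
      have hsum := (normsub_le_iff u y x).mp (h x hxX)
      rw [Fintype.sum_eq_add_sum_compl i, Fintype.sum_eq_add_sum_compl i] at hsum
      have htail : ∑ k ∈ ({i} : Finset (Fin n))ᶜ, (u k - x k)^2
          = ∑ k ∈ ({i} : Finset (Fin n))ᶜ, (u k - y k)^2 := by
        refine Finset.sum_congr rfl fun k hk => ?_
        rw [Finset.mem_compl, Finset.mem_singleton] at hk
        simp only [hxdef, PiLp.toLp_apply, if_neg hk]
      rw [htail] at hsum
      have hxi : x i = u i := by simp [hxdef]
      have h0 : (u i - y i)^2 ≤ 0 := by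
        have : (u i - x i)^2 = 0 := by rw [hxi]; ring
        linarith
      have : u i - y i = 0 := by nlinarith [sq_nonneg (u i - y i)]
      linarith
    refine ⟨hu, fun j hj => ?_⟩
    refine Finset.le_inf' hSne _ fun i hi => ?_
    classical
    have hij : i ≠ j := fun h' => hj (h' ▸ hi)
    set x : EuclideanSpace ℝ (Fin n) :=
      (WithLp.toLp 2 (fun k => if k = j then u j else if k = i then 0 else y k)) with hxdef
    have hxX : x ∈ {x : EuclideanSpace ℝ (Fin n) |
        ∃ T : Finset (Fin n), T.card ≤ r ∧ ∀ i ∉ T, x i = 0} := by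
      refine ⟨insert j (S.erase i), ?_, fun k hk => ?_⟩
      · rw [Finset.card_insert_of_notMem (fun h' => hj (Finset.mem_of_mem_erase h'))]
        rw [Finset.card_erase_of_mem hi, hS]
        omega
      · rw [Finset.mem_insert, not_or] at hk
        obtain ⟨hkj, hke⟩ := hk
        simp only [hxdef, PiLp.toLp_apply, if_neg hkj]
        by_cases hki : k = i
        · rw [if_pos hki]
        · rw [if_neg hki]
          exact hyc k (fun hkS => hke (Finset.mem_erase.mpr ⟨hki, hkS⟩))
    have hsum := (normsub_le_iff u y x).mp (h x hxX)
    have hsplit : ∀ f : Fin n → ℝ,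
        ∑ k, f k = f i + f j + ∑ k ∈ ({i, j} : Finset (Fin n))ᶜ, f k := by
      intro f
      rw [← Finset.sum_add_sum_compl ({i, j} : Finset (Fin n)) f,
        Finset.sum_pair hij]
    rw [hsplit (fun k => (u k - y k)^2), hsplit (fun k => (u k - x k)^2)] at hsum
    have htail : ∑ k ∈ ({i, j} : Finset (Fin n))ᶜ, (u k - x k)^2
        = ∑ k ∈ ({i, j} : Finset (Fin n))ᶜ, (u k - y k)^2 := by
      refine Finset.sum_congr rfl fun k hk => ?_
      rw [Finset.mem_compl, Finset.mem_insert, Finset.mem_singleton, not_or] at hk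
      simp only [hxdef, PiLp.toLp_apply, if_neg hk.2, if_neg hk.1]
    rw [htail] at hsum
    have hxi : x i = 0 := by simp [hxdef, hij]
    have hxj : x j = u j := by simp [hxdef]
    have hui : u i = y i := hu i hi
    have hyj : y j = 0 := hyc j hj
    have hkey : (u j)^2 ≤ (y i)^2 := by
      rw [hxi, hxj, hui, hyj] at hsum
      nlinarith [hsum]
    have := Real.sqrt_le_sqrt hkey
    rwa [Real.sqrt_sq_eq_abs, Real.sqrt_sq_eq_abs] at this
  · rintro ⟨hu, hb⟩ x ⟨T, hT, hxT⟩
    classical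
    set m := S.inf' hSne fun i => |y i| with hm
    have hm0 : 0 ≤ m := Finset.le_inf' hSne _ fun i _ => abs_nonneg (y i)
    rw [normsub_le_iff]
    have hL : ∑ k, (u k - y k)^2 = ∑ k ∈ Sᶜ, (u k)^2 := by
      rw [← Finset.sum_add_sum_compl S]
      rw [Finset.sum_eq_zero (fun k hk => by rw [hu k hk]; ring), zero_add]
      exact Finset.sum_congr rfl fun k hk =>
        by rw [hyc k (Finset.mem_compl.mp hk), sub_zero]
    have hR : ∑ k ∈ Tᶜ, (u k)^2 ≤ ∑ k, (u k - x k)^2 := by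
      rw [← Finset.sum_add_sum_compl T]
      have ht : ∑ k ∈ Tᶜ, (u k - x k)^2 = ∑ k ∈ Tᶜ, (u k)^2 :=
        Finset.sum_congr rfl fun k hk =>
          by rw [hxT k (Finset.mem_compl.mp hk), sub_zero]
      rw [ht]
      exact le_add_of_nonneg_left (Finset.sum_nonneg fun _ _ => sq_nonneg _)
    rw [hL]
    refine le_trans ?_ hR
    -- core inequality: ∑_{Sᶜ} u² ≤ ∑_{Tᶜ} u²
    have e1 : Sᶜ \ Tᶜ = T \ S := by
      ext k; simp [Finset.mem_sdiff, and_comm]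
    have e2 : Tᶜ \ Sᶜ = S \ T := by
      ext k; simp [Finset.mem_sdiff, and_comm]
    have e3 : Tᶜ ∩ Sᶜ = Sᶜ ∩ Tᶜ := Finset.inter_comm _ _
    rw [← Finset.sum_inter_add_sum_sdiff Sᶜ Tᶜ (fun k => (u k)^2),
      ← Finset.sum_inter_add_sum_sdiff Tᶜ Sᶜ (fun k => (u k)^2), e1, e2, e3]
    have h1 : ∑ k ∈ T \ S, (u k)^2 ≤ (T \ S).card * m^2 := by
      have := Finset.sum_le_card_nsmul (T \ S) (fun k => (u k)^2) (m^2)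
        (fun k hk => by
          have hk' : k ∉ S := (Finset.mem_sdiff.mp hk).2
          calc (u k)^2 = |u k|^2 := (sq_abs _).symm
            _ ≤ m^2 := pow_le_pow_left₀ (abs_nonneg _) (hb k hk') 2)
      rwa [nsmul_eq_mul] at this
    have h2 : ((S \ T).card : ℝ) * m^2 ≤ ∑ k ∈ S \ T, (u k)^2 := by
      have := Finset.card_nsmul_le_sum (S \ T) (fun k => (u k)^2) (m^2)
        (fun k hk => by
          have hk' : k ∈ S := (Finset.mem_sdiff.mp hk).1
          calc m^2 ≤ |y k|^2 :=
                pow_le_pow_left₀ hm0 (Finset.inf'_le _ hk') 2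
            _ = (u k)^2 := by rw [sq_abs, hu k hk'])
      rwa [nsmul_eq_mul] at this
    have h3 : (T \ S).card ≤ (S \ T).card := by
      have a1 := Finset.card_sdiff_add_card_inter T S
      have a2 := Finset.card_sdiff_add_card_inter S T
      have a3 : (T ∩ S).card = (S ∩ T).card := by rw [Finset.inter_comm]
      omega
    have h4 : ((T \ S).card : ℝ) * m^2 ≤ ((S \ T).card : ℝ) * m^2 :=
      mul_le_mul_of_nonneg_right (Nat.cast_le.mpr h3) (sq_nonneg m)
    linarith
end

section
/- Let X = {(x₁, x₂) ∈ ℝ² : x₁³ = x₂²} be the cuspidal cubic curve and let y = (4, 8) ∈ X. Then the Voronoi cell of y is the line segment with endpoints (−26, 18) and (28, 0): Vor_X(y) = {(1−s)·(−26, 18) + s·(28, 0) : s ∈ [0, 1]}. -/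
/-- The point `(a, b)` of the Euclidean plane `ℝ²`. -/
noncomputable def pt (a b : ℝ) : EuclideanSpace ℝ (Fin 2) :=
  (WithLp.equiv 2 (Fin 2 → ℝ)).symm ![a, b]

private lemma norm_two' (u x : EuclideanSpace ℝ (Fin 2)) :
    ‖u - x‖ = Real.sqrt ((u 0 - x 0)^2 + (u 1 - x 1)^2) := by
  rw [EuclideanSpace.norm_eq]
  congr 1
  simp [Fin.sum_univ_two, sq_abs]

private lemma cube_sq_nonneg (x0 x1 : ℝ) (h : x0^3 = x1^2) : 0 ≤ x0 := by
  by_contra hc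
  push_neg at hc
  have := Odd.pow_neg (by decide : Odd 3) hc
  nlinarith [sq_nonneg x1]

private lemma F18' (x0 x1 : ℝ) (h : x1^2 = x0^3) (hx0 : 0 ≤ x0) :
    0 ≤ x0^2 + x1^2 - 36*x1 + 52*x0 := by
  rcases le_or_gt x1 0 with h1 | h1
  · nlinarith
  · have hmul : 0 < x0^3 + x0^2 + 52*x0 + 36*x1 := by positivity
    have key : 0 ≤ (x0^2 + x1^2 - 36*x1 + 52*x0) * (x0^3 + x0^2 + 52*x0 + 36*x1) := by
      have : (x0^2 + x1^2 - 36*x1 + 52*x0) * (x0^3 + x0^2 + 52*x0 + 36*x1)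
          = x0^2 * (x0-4)^2 * ((x0+5)^2 + 144) := by
        linear_combination (x0^3+x0^2+52*x0+36*x1-1296) * h
      rw [this]; positivity
    rw [mul_comm] at key
    exact nonneg_of_mul_nonneg_right key hmul

private lemma Fkey (x0 x1 b : ℝ) (h : x1^2 = x0^3) (hx0 : 0 ≤ x0) (hb0 : 0 ≤ b) (hb18 : b ≤ 18) :
    0 ≤ x0^2 + x1^2 - 2*b*x1 - (56-6*b)*x0 + 144 - 8*b := by
  have h18 := F18' x0 x1 h hx0
  have h0 : 0 ≤ x0^2 + x1^2 - 56*x0 + 144 := by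
    nlinarith [sq_nonneg (x0-4), mul_nonneg (sq_nonneg (x0-4)) hx0]
  nlinarith [mul_nonneg hb0 h18, mul_nonneg (by linarith : (0:ℝ) ≤ 18 - b) h0]

/-- For the cuspidal cubic `X = {x₁³ = x₂²}` and the point `y = (4,8) ∈ X`,
the Voronoi cell of `y` is the line segment with endpoints `(−26,18)` and `(28,0)`. -/
theorem voronoi_cell_cuspidal_cubic_smooth_point
    (X : Set (EuclideanSpace ℝ (Fin 2)))
    (hX : X = {x | (x 0) ^ 3 = (x 1) ^ 2}) :
    {u : EuclideanSpace ℝ (Fin 2) | ∀ x ∈ X, ‖u - pt 4 8‖ ≤ ‖u - x‖}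
      = segment ℝ (pt (-26) 18) (pt 28 0) := by
  ext u
  simp only [Set.mem_setOf_eq]
  constructor
  · intro hu
    set a := u 0 with ha'
    set b := u 1 with hb'
    have key : ∀ t : ℝ, (a-4)^2 + (b-8)^2 ≤ (a - t^2)^2 + (b - t^3)^2 := by
      intro t
      have hmem : pt (t^2) (t^3) ∈ X := by
        rw [hX]; show (t^2)^3 = (t^3)^2; ring
      have := hu (pt (t^2) (t^3)) hmem
      rw [norm_two', norm_two'] at this
      have h2 := (Real.sqrt_le_sqrt_iff (by positivity)).mp this
      simpa [pt] using h2
    -- h t := quintic cofactor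
    set h : ℝ → ℝ := fun t =>
      t^5 + 2*t^4 + 5*t^3 + (10-2*b)*t^2 + (20-4*b-2*a)*t + (40-8*b-4*a) with hdef
    have hfac : ∀ t : ℝ, (t-2) * h t
        = (a - t^2)^2 + (b - t^3)^2 - ((a-4)^2 + (b-8)^2) := by
      intro t; simp only [hdef]; ring
    have hpos : ∀ t : ℝ, 2 < t → 0 ≤ h t := by
      intro t ht
      have h1 : 0 ≤ (t-2) * h t := by rw [hfac]; linarith [key t]
      exact nonneg_of_mul_nonneg_right h1 (by linarith)
    have hneg : ∀ t : ℝ, t < 2 → h t ≤ 0 := by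
      intro t ht
      have h1 : 0 ≤ (t-2) * h t := by rw [hfac]; linarith [key t]
      by_contra hc
      push_neg at hc
      nlinarith [mul_pos (show (0:ℝ) < 2-t by linarith) hc]
    have hcont : Continuous h := by
      simp only [hdef]; continuity
    have h2val : h 2 = 224 - 8*a - 24*b := by simp only [hdef]; ring
    have hge : 0 ≤ h 2 := by
      have ht : Filter.Tendsto h (nhdsWithin 2 (Set.Ioi 2)) (nhds (h 2)) :=
        (hcont.tendsto 2).mono_left nhdsWithin_le_nhds
      have hev : ∀ᶠ t in nhdsWithin 2 (Set.Ioi (2:ℝ)), 0 ≤ h t :=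
        eventually_nhdsWithin_of_forall (fun t ht' => hpos t ht')
      exact ge_of_tendsto ht hev
    have hle : h 2 ≤ 0 := by
      have ht : Filter.Tendsto h (nhdsWithin 2 (Set.Iio 2)) (nhds (h 2)) :=
        (hcont.tendsto 2).mono_left nhdsWithin_le_nhds
      have hev : ∀ᶠ t in nhdsWithin 2 (Set.Iio (2:ℝ)), h t ≤ 0 :=
        eventually_nhdsWithin_of_forall (fun t ht' => hneg t ht')
      exact le_of_tendsto ht hev
    have hline : a = 28 - 3*b := by
      rw [h2val] at hge hle; linarith
    -- b ≥ 0 from x = (4, -8)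
    have hb0 : 0 ≤ b := by
      have hmem : pt 4 (-8) ∈ X := by rw [hX]; show (4:ℝ)^3 = (-8:ℝ)^2; norm_num
      have := hu (pt 4 (-8)) hmem
      rw [norm_two', norm_two'] at this
      have h2 := (Real.sqrt_le_sqrt_iff (by positivity)).mp this
      have h3 : (u 0 - 4)^2 + (u 1 - 8)^2 ≤ (u 0 - 4)^2 + (u 1 - (-8))^2 := h2
      nlinarith [h3]
    -- b ≤ 18 from x = (0,0)
    have hb18 : b ≤ 18 := by
      have hmem : pt 0 0 ∈ X := by rw [hX]; show (0:ℝ)^3 = (0:ℝ)^2; norm_num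
      have := hu (pt 0 0) hmem
      rw [norm_two', norm_two'] at this
      have h2 := (Real.sqrt_le_sqrt_iff (by positivity)).mp this
      have h3 : (u 0 - 4)^2 + (u 1 - 8)^2 ≤ (u 0 - 0)^2 + (u 1 - 0)^2 := h2
      nlinarith [h3, hline]
    refine ⟨b/18, 1 - b/18, by positivity, by linarith, by ring, ?_⟩
    ext i
    fin_cases i
    · show b/18 * (-26) + (1 - b/18) * 28 = a
      rw [hline]; ring
    · show b/18 * 18 + (1 - b/18) * 0 = b
      ring
  · rintro ⟨c, d, hc, hd, hcd, hsum⟩ x hx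
    rw [hX] at hx
    have ha : u 0 = -26*c + 28*d := by rw [← hsum]; simp [pt]; ring
    have hb : u 1 = 18*c := by rw [← hsum]; simp [pt]; ring
    have hx0 : 0 ≤ x 0 := cube_sq_nonneg (x 0) (x 1) hx
    rw [norm_two', norm_two']
    apply Real.sqrt_le_sqrt
    simp only [pt]
    have ha' : u 0 = 28 - 3 * u 1 := by rw [ha, hb]; linarith
    show (u 0 - 4)^2 + (u 1 - 8)^2 ≤ (u 0 - x 0)^2 + (u 1 - x 1)^2
    rw [ha']
    have hb0 : 0 ≤ u 1 := by rw [hb]; positivity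
    have hb18 : u 1 ≤ 18 := by rw [hb]; linarith
    have := Fkey (x 0) (x 1) (u 1) hx.symm hx0 hb0 hb18
    nlinarith [this]
end

section
/- Let X = {(x₁, x₂) ∈ ℝ² : x₁³ = x₂²} be the cuspidal cubic curve and let y = (0, 0) be its cusp. Then the Voronoi cell of the cusp is the two-dimensional region bounded by a quartic curve; precisely, Vor_X(y) = {(u₁, u₂) ∈ ℝ² : 27u₂⁴ + 128u₁³ + 72u₁u₂² + 32u₁² + u₂² + 2u₁ ≤ 0}. -/
private lemma cuspRoot (c : ℝ) : ∃ t : ℝ, 2*t^3 + t = c := by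
  have hc : Continuous fun t : ℝ => 2*t^3 + t := by continuity
  have hab : (-(|c|+1) : ℝ) ≤ |c|+1 := by nlinarith [abs_nonneg c]
  have h := intermediate_value_Icc hab hc.continuousOn
  have hmem : c ∈ Set.Icc ((fun t : ℝ => 2*t^3 + t) (-(|c|+1))) ((fun t : ℝ => 2*t^3 + t) (|c|+1)) := by
    constructor <;> simp only [] <;>
      nlinarith [abs_nonneg c, neg_abs_le c, le_abs_self c, sq_nonneg (|c|+1), sq_nonneg c]
  obtain ⟨t, _, ht⟩ := h hmem
  exact ⟨t, ht⟩

private lemma normIff (u x : EuclideanSpace ℝ (Fin 2)) :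
    (‖u - 0‖ ≤ ‖u - x‖ ↔ (u 0)^2 + (u 1)^2 ≤ (u 0 - x 0)^2 + (u 1 - x 1)^2) := by
  rw [EuclideanSpace.norm_eq, EuclideanSpace.norm_eq]
  simp [Fin.sum_univ_two, Real.norm_eq_abs, sq_abs]
  rw [Real.sqrt_le_sqrt_iff (by positivity)]

/-- from nonnegativity of `t² f(t)` deduce nonnegativity of `f` by continuity -/
private lemma quarticNonneg (a b : ℝ)
    (P : ∀ t : ℝ, 0 ≤ t^2 * (t^4 + t^2 - 2*b*t - 2*a)) :
    ∀ t : ℝ, 0 ≤ t^4 + t^2 - 2*b*t - 2*a := by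
  have hne : ∀ t : ℝ, t ≠ 0 → 0 ≤ t^4 + t^2 - 2*b*t - 2*a := by
    intro t ht
    have h2 : (0:ℝ) < t^2 := by positivity
    exact (mul_nonneg_iff_of_pos_left h2).mp (P t)
  intro t
  rcases eq_or_ne t 0 with h | h
  · subst h
    have hf : Continuous fun s : ℝ => s^4 + s^2 - 2*b*s - 2*a := by continuity
    have hlim : Filter.Tendsto (fun s : ℝ => s^4 + s^2 - 2*b*s - 2*a)
        (nhdsWithin 0 {(0:ℝ)}ᶜ) (nhds ((0:ℝ)^4 + 0^2 - 2*b*0 - 2*a)) :=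
      (hf.continuousAt).continuousWithinAt
    have hev : ∀ᶠ s in nhdsWithin (0:ℝ) {(0:ℝ)}ᶜ, 0 ≤ s^4 + s^2 - 2*b*s - 2*a := by
      filter_upwards [self_mem_nhdsWithin] with s hs
      exact hne s hs
    have := ge_of_tendsto hlim hev
    simpa using this
  · exact hne t h

/-- key factorization of the quartic at a critical point -/
private lemma gFact (t a : ℝ) :
    27*(2*t^3+t)^4 + 128*a^3 + 72*a*(2*t^3+t)^2 + 32*a^2 + (2*t^3+t)^2 + 2*a
      = (3*t^4 + t^2 + 2*a) *
        ((8*a + 1 - 2*t^2 - 6*t^4)^2 + 4*t^2*(27*t^6 + 54*t^4 + 36*t^2 + 8)) := by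
  ring

private lemma coreIff (a b : ℝ) :
    (∀ t : ℝ, 0 ≤ t^4 + t^2 - 2*b*t - 2*a) ↔
      27*b^4 + 128*a^3 + 72*a*b^2 + 32*a^2 + b^2 + 2*a ≤ 0 := by
  obtain ⟨t₀, h0⟩ := cuspRoot b
  have hfact : 27*b^4 + 128*a^3 + 72*a*b^2 + 32*a^2 + b^2 + 2*a
      = (3*t₀^4 + t₀^2 + 2*a) *
        ((8*a + 1 - 2*t₀^2 - 6*t₀^4)^2 + 4*t₀^2*(27*t₀^6 + 54*t₀^4 + 36*t₀^2 + 8)) := by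
    rw [← h0]; ring
  have hH : 0 ≤ (8*a + 1 - 2*t₀^2 - 6*t₀^4)^2 + 4*t₀^2*(27*t₀^6 + 54*t₀^4 + 36*t₀^2 + 8) := by
    positivity
  constructor
  · intro P
    have hA : 3*t₀^4 + t₀^2 + 2*a ≤ 0 := by
      have := P t₀
      rw [← h0] at this
      nlinarith [this]
    rw [hfact]
    nlinarith [mul_nonneg hH (neg_nonneg.mpr hA)]
  · intro hg
    rw [hfact] at hg
    have hA : 3*t₀^4 + t₀^2 + 2*a ≤ 0 := by
      rcases hH.eq_or_lt with hz | hpos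
      · -- H = 0 : then t₀ = 0 and a = -1/8
        have ht2 : t₀^2 ≤ 0 := by
          nlinarith [sq_nonneg (8*a + 1 - 2*t₀^2 - 6*t₀^4), sq_nonneg t₀, sq_nonneg (t₀^2),
            sq_nonneg (t₀^3), sq_nonneg (t₀^4)]
        have ht0 : t₀ = 0 := by nlinarith [sq_nonneg t₀]
        rw [ht0] at hz
        have : (8*a + 1)^2 = 0 := by nlinarith [hz]
        have ha : a = -(1/8) := by nlinarith [sq_nonneg (8*a+1)]
        rw [ht0, ha]; norm_num
      · by_contra h
        push_neg at h
        nlinarith [mul_pos h hpos]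
    intro t
    have hid : t^4 + t^2 - 2*b*t - 2*a
        = (t - t₀)^2 * ((t + t₀)^2 + 2*t₀^2 + 1) - (3*t₀^4 + t₀^2 + 2*a) := by
      rw [← h0]; ring
    have hpos : 0 ≤ (t - t₀)^2 * ((t + t₀)^2 + 2*t₀^2 + 1) := by positivity
    linarith [hid.ge, hid.le]

/-- For the cuspidal cubic `X = {x₁³ = x₂²}` and its cusp `y = (0,0)`,
the Voronoi cell of `y` is the planar region bounded by the quartic curve
`27u₂⁴ + 128u₁³ + 72u₁u₂² + 32u₁² + u₂² + 2u₁ = 0`. -/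
theorem voronoi_cell_cuspidal_cubic_cusp
    (X : Set (EuclideanSpace ℝ (Fin 2)))
    (hX : X = {x | (x 0) ^ 3 = (x 1) ^ 2}) :
    {u : EuclideanSpace ℝ (Fin 2) | ∀ x ∈ X, ‖u - 0‖ ≤ ‖u - x‖}
      = {u : EuclideanSpace ℝ (Fin 2) |
          27 * (u 1) ^ 4 + 128 * (u 0) ^ 3 + 72 * (u 0) * (u 1) ^ 2
            + 32 * (u 0) ^ 2 + (u 1) ^ 2 + 2 * (u 0) ≤ 0} := by
  ext u
  simp only [Set.mem_setOf_eq]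
  constructor
  · intro hu
    have P : ∀ t : ℝ, 0 ≤ t^2 * (t^4 + t^2 - 2*(u 1)*t - 2*(u 0)) := by
      intro t
      set x : EuclideanSpace ℝ (Fin 2) := !₂[t^2, t^3] with hxdef
      have hx0 : x 0 = t^2 := rfl
      have hx1 : x 1 = t^3 := rfl
      have hmem : x ∈ X := by
        rw [hX]
        show (x 0)^3 = (x 1)^2
        rw [hx0, hx1]; ring
      have h := (normIff u x).mp (hu x hmem)
      rw [hx0, hx1] at h
      nlinarith [h]
    have key := quarticNonneg (u 0) (u 1) P
    have := (coreIff (u 0) (u 1)).mp key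
    linarith
  · intro hg x hmem
    rw [hX] at hmem
    have hx : (x 0)^3 = (x 1)^2 := hmem
    rw [normIff]
    have key := (coreIff (u 0) (u 1)).mpr (by linarith)
    rcases eq_or_ne (x 0) 0 with h0 | h0
    · have h1 : x 1 = 0 := by
        have : (x 1)^2 = 0 := by rw [← hx, h0]; ring
        exact pow_eq_zero_iff two_ne_zero |>.mp this
      rw [h0, h1]
      simp
    · have hpos : 0 < x 0 := by
        rcases lt_trichotomy (x 0) 0 with h | h | h
        · exfalso
          have h3 : x 0 ^ 3 < 0 := Odd.pow_neg ⟨1, by norm_num⟩ h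
          nlinarith [sq_nonneg (x 1)]
        · exact absurd h h0
        · exact h
      set t : ℝ := x 1 / x 0 with htdef
      have ht2 : t^2 = x 0 := by
        rw [htdef, div_pow, div_eq_iff (pow_ne_zero 2 h0)]
        linear_combination (-1 : ℝ) * hx
      have ht3 : t^3 = x 1 := by
        rw [htdef, div_pow, div_eq_iff (pow_ne_zero 3 h0)]
        linear_combination (-(x 1)) * hx
      rw [← ht2, ← ht3]
      nlinarith [mul_nonneg (sq_nonneg t) (key t)]
end

section
/- Let X = {(x₁, x₂) ∈ ℝ² : (x₁² + x₂² + x₁)² = x₁² + x₂²} be the cardioid and let y = (0, 0) be its singular point. Then the Voronoi cell of y is the closed disk bounded by the circle x₁² + x₂² + x₁ = 0: Vor_X(y) = {(u₁, u₂) ∈ ℝ² : u₁² + u₂² + u₁ ≤ 0}. -/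
lemma norm_helper (u x : EuclideanSpace ℝ (Fin 2)) :
    ‖u - 0‖ ≤ ‖u - x‖ ↔ 2*(u 0 * x 0 + u 1 * x 1) ≤ x 0^2 + x 1^2 := by
  rw [sub_zero, EuclideanSpace.norm_eq, EuclideanSpace.norm_eq,
    Real.sqrt_le_sqrt_iff (by positivity)]
  simp only [Fin.sum_univ_two, Real.norm_eq_abs, sq_abs, PiLp.sub_apply]
  constructor <;> intro h <;> nlinarith [h]

/-- For the cardioid `X = {(x₁²+x₂²+x₁)² = x₁²+x₂²}` and its singular
point `y = (0,0)`, the Voronoi cell of `y` is the closed disk bounded by the circle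
`x₁² + x₂² + x₁ = 0`. -/
theorem voronoi_cell_cardioid_cusp
    (X : Set (EuclideanSpace ℝ (Fin 2)))
    (hX : X = {x | ((x 0) ^ 2 + (x 1) ^ 2 + x 0) ^ 2 = (x 0) ^ 2 + (x 1) ^ 2}) :
    {u : EuclideanSpace ℝ (Fin 2) | ∀ x ∈ X, ‖u - 0‖ ≤ ‖u - x‖}
      = {u : EuclideanSpace ℝ (Fin 2) | (u 0) ^ 2 + (u 1) ^ 2 + u 0 ≤ 0} := by
  subst hX
  ext u
  simp only [Set.mem_setOf_eq]
  constructor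
  · -- Voronoi ⊆ disk
    intro h
    by_contra hu
    push_neg at hu
    by_cases hdeg : u 1 = 0 ∧ 0 ≤ 2 * u 0 + 1
    · obtain ⟨h1, h2⟩ := hdeg
      have ha : 0 < u 0 := by nlinarith
      obtain ⟨a, hadef⟩ : ∃ a : ℝ, a = u 0 := ⟨_, rfl⟩
      rw [← hadef] at ha h2
      have hq0 : (0:ℝ) ≤ a * (3*a+2) := by nlinarith
      obtain ⟨q, hqdef⟩ : ∃ q : ℝ, q = Real.sqrt (a*(3*a+2)) := ⟨_, rfl⟩
      have hq : q^2 = a*(3*a+2) := by rw [hqdef]; exact Real.sq_sqrt hq0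
      set x : EuclideanSpace ℝ (Fin 2) :=
        (WithLp.equiv 2 (Fin 2 → ℝ)).symm ![a*(a+1)/(2*a+1)^2, a*q/(2*a+1)^2] with hxdef
      have hx0 : x 0 = a*(a+1)/(2*a+1)^2 := by simp [hxdef]
      have hx1 : x 1 = a*q/(2*a+1)^2 := by simp [hxdef]
      have hd : (2*a+1) ≠ 0 := by positivity
      have hd2 : (0:ℝ) < (2*a+1)^2 := by positivity
      have hs : x 0^2 + x 1^2 = a^2/(2*a+1)^2 := by
        rw [hx0, hx1]; field_simp; linear_combination hq
      have hsum : x 0^2 + x 1^2 + x 0 = a/(2*a+1) := by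
        rw [hs, hx0]; field_simp; ring
      have hmem : (x 0^2 + x 1^2 + x 0)^2 = x 0^2 + x 1^2 := by
        rw [hsum, hs, div_pow]
      have hle := (norm_helper u x).mp (h x hmem)
      rw [hs, hx0, hx1, h1, ← hadef] at hle
      have key : 2*(a*(a*(a+1)/(2*a+1)^2) + 0*(a*q/(2*a+1)^2))
          = 2*a^2*(a+1)/(2*a+1)^2 := by ring
      rw [key, div_le_div_iff₀ hd2 hd2] at hle
      nlinarith [mul_pos (mul_pos (mul_pos ha ha) hd2) ha]
    · push_neg at hdeg
      obtain ⟨m, hmdef⟩ : ∃ m : ℝ, m = Real.sqrt ((2*u 0+1)^2 + 4*u 1^2) := ⟨_, rfl⟩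
      have hm2 : m^2 = (2*u 0+1)^2 + 4*u 1^2 := by
        rw [hmdef]; exact Real.sq_sqrt (by positivity)
      have hm0 : 0 ≤ m := by rw [hmdef]; exact Real.sqrt_nonneg _
      have hm1 : 1 < m := by nlinarith
      have hmpos : 0 < m := by linarith
      have hcA : 2*u 0 + 1 < m := by
        rcases eq_or_ne (u 1) 0 with h1 | h1
        · have := hdeg h1; linarith
        · have h1' : 0 < u 1^2 :=
            lt_of_le_of_ne (sq_nonneg _) (Ne.symm (pow_ne_zero 2 h1))
          nlinarith
      obtain ⟨c, hcdef⟩ : ∃ c : ℝ, c = (m - (2*u 0+1))/m^2 := ⟨_, rfl⟩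
      have hcpos : 0 < c := by rw [hcdef]; exact div_pos (by linarith) (by positivity)
      have hc2 : c*m^2 = m - (2*u 0+1) := by
        rw [hcdef]; field_simp
      set x : EuclideanSpace ℝ (Fin 2) :=
        (WithLp.equiv 2 (Fin 2 → ℝ)).symm ![c*(2*u 0+1), c*(2*u 1)] with hxdef
      have hx0 : x 0 = c*(2*u 0+1) := by simp [hxdef]
      have hx1 : x 1 = c*(2*u 1) := by simp [hxdef]
      have hs : x 0^2 + x 1^2 = c^2*m^2 := by
        rw [hx0, hx1]; linear_combination c^2 * hm2.symm
      have hsum : x 0^2 + x 1^2 + x 0 = c*m := by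
        rw [hs, hx0]; linear_combination c * hc2
      have hmem : (x 0^2 + x 1^2 + x 0)^2 = x 0^2 + x 1^2 := by
        rw [hsum, hs]; ring
      have hle := (norm_helper u x).mp (h x hmem)
      rw [hs, hx0, hx1] at hle
      have e1 : 2*(u 0*(c*(2*u 0+1)) + u 1*(c*(2*u 1))) = c*m^2 - c*(2*u 0+1) := by
        linear_combination (-c) * hm2
      have e2 : c^2*m^2 = c*m - c*(2*u 0+1) := by linear_combination c * hc2
      nlinarith [mul_pos (mul_pos hcpos hmpos) (show (0:ℝ) < m - 1 by linarith)]
  · -- disk ⊆ Voronoi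
    intro hu x hx
    rw [norm_helper]
    obtain ⟨r, hrdef⟩ : ∃ r : ℝ, r = Real.sqrt (x 0^2 + x 1^2) := ⟨_, rfl⟩
    have hr : r^2 = x 0^2 + x 1^2 := by rw [hrdef]; exact Real.sq_sqrt (by positivity)
    have hr0 : 0 ≤ r := by rw [hrdef]; exact Real.sqrt_nonneg _
    have hfac : (x 0^2 + x 1^2 + x 0 - r) * (x 0^2 + x 1^2 + x 0 + r) = 0 := by
      linear_combination hx - hr
    rcases mul_eq_zero.mp hfac with hA | hB
    · have hA' : x 0^2 + x 1^2 + x 0 = r := by linarith [sub_eq_zero.mp hA]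
      have hp2 : (2*((u 0+1/2)*x 0 + u 1*x 1))^2 ≤ r^2 := by
        nlinarith [sq_nonneg ((2*u 0+1)*x 1 - 2*u 1*x 0),
          mul_nonneg (by linarith : (0:ℝ) ≤ -(u 0^2 + u 1^2 + u 0))
            (by positivity : (0:ℝ) ≤ x 0^2 + x 1^2)]
      have hple : 2*((u 0+1/2)*x 0 + u 1*x 1) ≤ r := by nlinarith [hp2, hr0]
      linarith
    · have hB' : x 0^2 + x 1^2 + x 0 = -r := by linarith
      have hx0eq : x 0 = -r - r^2 := by linarith
      have hx0sq : x 0^2 = (r + r^2)^2 := by rw [hx0eq]; ring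
      have hkey : 2*r^3 + r^4 + x 1^2 = 0 := by linear_combination -hr - hx0sq
      have hrz : r = 0 := by
        rcases eq_or_lt_of_le hr0 with h' | h'
        · exact h'.symm
        · exfalso
          have h3 : 0 < r^3 := by positivity
          have h4 : 0 ≤ r^4 := by positivity
          nlinarith [sq_nonneg (x 1)]
      have hx0z : x 0 = 0 := by rw [hx0eq, hrz]; ring
      have hx1z : x 1 = 0 := by
        have hx1sq : x 1^2 = 0 := by linear_combination -hr + r*hrz - x 0 * hx0z
        exact sq_eq_zero_iff.mp hx1sq
      rw [hx0z, hx1z]; norm_num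
end

section
/- Let X = {(x₁, x₂) ∈ ℝ² : (x₁² + x₂² + x₁)² = x₁² + x₂²} be the cardioid and let y = (0, 1) ∈ X. Then the Voronoi cell of y is the closed ray Vor_X(y) = {(t, t + 1) : t ∈ ℝ, t ≥ −1/2}, emanating from the point (−1/2, 1/2) on the circle x₁² + x₂² + x₁ = 0 in the direction (1, 1) normal to the cardioid at y. -/
lemma cardioidP1 (r s : ℝ) (hr : 0 ≤ r) (hs : 0 ≤ s) :
    (s*(r^2+1) - (s-1)*r)^2 ≥ (s+1)^2 * r^3 * (2-r) := by
  nlinarith [sq_nonneg (r-1), sq_nonneg (r*(r-1)), sq_nonneg (s*(r-1)^2 - r),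
    sq_nonneg (s*(r-1)^2 + r), mul_nonneg hr hs, mul_nonneg (mul_nonneg hr hr) hs,
    sq_nonneg ((s+1)*r*(r-1)), sq_nonneg (s*(r-1)), mul_nonneg (mul_nonneg hr hr) hr,
    sq_nonneg (r^2 - r), mul_nonneg hs (sq_nonneg (r-1))]

lemma cardioidCore (t a b : ℝ) (ht : -(1/2) ≤ t) (h : (a^2+b^2+a)^2 = a^2+b^2) :
    (t-0)^2 + ((t+1)-1)^2 ≤ (t-a)^2 + ((t+1)-b)^2 := by
  have hr0 : 0 ≤ Real.sqrt (a^2+b^2) := Real.sqrt_nonneg _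
  set r := Real.sqrt (a^2+b^2) with hrdef
  have hr2 : r^2 = a^2+b^2 := Real.sq_sqrt (by positivity)
  have hsq : (r^2 + a)^2 = r^2 := by rw [hr2]; exact h
  have hfac : (r^2 + a - r) * (r^2 + a + r) = 0 := by linear_combination hsq
  rcases mul_eq_zero.mp hfac with h1 | h2
  · have ha : a = r - r^2 := by linarith
    have hb2 : b^2 = r^2 - a^2 := by linarith
    have hbb : b^2 = 2*r^3 - r^4 := by linear_combination hb2 - (a + r - r^2)*ha
    have hA : 0 ≤ (1+2*t)*(r^2+1) - 2*t*r := by nlinarith [sq_nonneg (r-1)]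
    have hP := cardioidP1 r (1+2*t) hr0 (by linarith)
    have key : (t-a)^2+((t+1)-b)^2 - ((t-0)^2+((t+1)-1)^2)
        = ((1+2*t)*(r^2+1) - 2*t*r) - (2*t+2)*b := by
      linear_combination hb2 - 2*t*ha
    have hfin : 0 ≤ ((1+2*t)*(r^2+1) - 2*t*r) - (2*t+2)*b := by
      nlinarith [hP, hA, hbb, ht]
    linarith [key, hfin]
  · have ha : a = -r - r^2 := by linarith
    have hb2 : b^2 = r^2 - a^2 := by linarith
    have hbb : b^2 = -2*r^3 - r^4 := by linear_combination hb2 + (r + r^2 - a)*ha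
    have hrle : r ≤ 0 := by
      by_contra hc
      push_neg at hc
      nlinarith [hbb, sq_nonneg b, mul_pos (mul_pos hc hc) hc]
    have hr_eq : r = 0 := le_antisymm hrle hr0
    have ha0 : a = 0 := by rw [hr_eq] at ha; linarith
    have hb0 : b = 0 := by
      have : b^2 = 0 := by rw [hr_eq] at hbb; linarith
      exact pow_eq_zero_iff (n := 2) (by norm_num) |>.mp this
    rw [ha0, hb0]
    nlinarith [ht]

lemma polyContradiction (K A B C : ℝ) (hK0 : K ≠ 0)
    (hG : ∀ w : ℝ, 0 ≤ 4*K*w + A*w^2 + B*w^3 + C*w^4) : False := by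
  set M := (A^2+B^2+C^2+3)/2 with hMdef
  have hM0 : 0 ≤ M := by positivity
  set m := min ((2*(|K|+1))⁻¹) ((M+1)⁻¹) with hmdef
  have hm0 : 0 < m := lt_min (by positivity) (by positivity)
  set w := -K*m with hwdef
  have hm1 : m * (2*(|K|+1)) ≤ 1 := by
    have h2 : (0:ℝ) < 2*(|K|+1) := by positivity
    have h3 := mul_le_mul_of_nonneg_right (min_le_left ((2*(|K|+1))⁻¹) ((M+1)⁻¹)) h2.le
    rwa [inv_mul_cancel₀ h2.ne'] at h3
  have hm2 : m * (M+1) ≤ 1 := by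
    have h2 : (0:ℝ) < M+1 := by positivity
    have h3 := mul_le_mul_of_nonneg_right (min_le_right ((2*(|K|+1))⁻¹) ((M+1)⁻¹)) h2.le
    rwa [inv_mul_cancel₀ h2.ne'] at h3
  have hw2 : w^2 ≤ 1 := by
    have hKm : |K| * m ≤ 1 := by nlinarith [abs_nonneg K, hm0.le]
    have he : w^2 = (|K| * m)^2 := by rw [hwdef, mul_pow, mul_pow, sq_abs]; ring
    rw [he]
    nlinarith [mul_nonneg (abs_nonneg K) hm0.le]
  have hGw := hG w
  have hbA : A*w^2 ≤ ((A^2+1)/2)*w^2 := by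
    nlinarith [mul_nonneg (sq_nonneg w) (sq_nonneg (A-1))]
  have hbB : B*w^3 ≤ ((B^2+1)/2)*w^2 := by
    nlinarith [mul_nonneg (sq_nonneg w) (sq_nonneg (B-w)),
      mul_nonneg (sq_nonneg w) (sub_nonneg.2 hw2)]
  have hbC : C*w^4 ≤ ((C^2+1)/2)*w^2 := by
    nlinarith [mul_nonneg (sq_nonneg w) (sq_nonneg (C-w^2)),
      mul_nonneg (sq_nonneg w) (sub_nonneg.2 hw2),
      mul_nonneg (sq_nonneg (w*w)) (sub_nonneg.2 hw2)]
  have hb : A*w^2 + B*w^3 + C*w^4 ≤ M*w^2 := by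
    have : ((A^2+1)/2)*w^2 + ((B^2+1)/2)*w^2 + ((C^2+1)/2)*w^2 = M*w^2 := by
      rw [hMdef]; ring
    linarith
  have h4 : 4*K*w = -(4*K^2*m) := by rw [hwdef]; ring
  have h5 : 0 ≤ -(4*K^2*m) + M*w^2 := by linarith
  have h7 : w^2 = K^2*m^2 := by rw [hwdef]; ring
  have h6 : M*w^2 ≤ K^2*m := by
    rw [h7]
    nlinarith [mul_nonneg (mul_nonneg (sq_nonneg K) hm0.le) (sub_nonneg.2 hm2),
      sq_nonneg (K*m), hM0, sq_nonneg K, hm0.le]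
  have hK2m : 0 < K^2*m := mul_pos (by positivity) hm0
  linarith

lemma norm_pt (v : EuclideanSpace ℝ (Fin 2)) :
    ‖v‖ = Real.sqrt ((v 0)^2 + (v 1)^2) := by
  rw [EuclideanSpace.norm_eq, Fin.sum_univ_two]
  simp [Real.norm_eq_abs, sq_abs]

/-- For the cardioid `X = {(x₁²+x₂²+x₁)² = x₁²+x₂²}` and the smooth point
`y = (0,1) ∈ X`, the Voronoi cell of `y` is the closed ray `{(t, t+1) : t ≥ −1/2}`. -/
theorem voronoi_cell_cardioid_smooth_point
    (X : Set (EuclideanSpace ℝ (Fin 2)))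
    (hX : X = {x | ((x 0) ^ 2 + (x 1) ^ 2 + x 0) ^ 2 = (x 0) ^ 2 + (x 1) ^ 2}) :
    {u : EuclideanSpace ℝ (Fin 2) | ∀ x ∈ X, ‖u - pt 0 1‖ ≤ ‖u - x‖}
      = {u : EuclideanSpace ℝ (Fin 2) | ∃ t : ℝ, -(1 / 2) ≤ t ∧ u = pt t (t + 1)} := by
  subst hX
  ext u
  simp only [Set.mem_setOf_eq]
  constructor
  · intro hu
    -- squared form of the Voronoi condition
    have husq : ∀ a b : ℝ, (a^2+b^2+a)^2 = a^2+b^2 →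
        (u 0 - 0)^2 + (u 1 - 1)^2 ≤ (u 0 - a)^2 + (u 1 - b)^2 := by
      intro a b hab
      have h1 : ‖u - pt 0 1‖ ≤ ‖u - pt a b‖ := hu (pt a b) hab
      rw [norm_pt, norm_pt] at h1
      have e1 : Real.sqrt ((u 0 - 0)^2 + (u 1 - 1)^2)
          ≤ Real.sqrt ((u 0 - a)^2 + (u 1 - b)^2) := h1
      have e2 := mul_self_le_mul_self (Real.sqrt_nonneg _) e1
      rwa [Real.mul_self_sqrt (by positivity), Real.mul_self_sqrt (by positivity)] at e2
    have hq2 : 1/2 ≤ u 1 := by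
      have := husq 0 0 (by norm_num)
      nlinarith [this]
    have hK : u 1 - 1 - u 0 = 0 := by
      by_contra hK0
      have hG : ∀ w : ℝ, 0 ≤ 4*(u 1 - 1 - u 0)*w + (4+8*(u 0)+4*(u 1))*w^2
          + (-4-4*(u 0)-4*(u 1))*w^3 + (4*(u 1))*w^4 := by
        intro w
        have hd : (0:ℝ) < 1+w^2 := by positivity
        have hs := husq (2*w*(1-w)^2/(1+w^2)^2) ((1-w)^3*(1+w)/(1+w^2)^2)
          (by field_simp; ring)
        have expand : 4*(u 1 - 1 - u 0)*w + (4+8*(u 0)+4*(u 1))*w^2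
            + (-4-4*(u 0)-4*(u 1))*w^3 + (4*(u 1))*w^4
            = ((u 0 - 2*w*(1-w)^2/(1+w^2)^2)^2 + (u 1 - (1-w)^3*(1+w)/(1+w^2)^2)^2
              - ((u 0 - 0)^2 + (u 1 - 1)^2)) * (1+w^2)^2 := by
          field_simp
          ring
        rw [expand]
        have h0 : (0:ℝ) ≤ (1+w^2)^2 := by positivity
        nlinarith [hs, h0]
      exact polyContradiction (u 1 - 1 - u 0) (4+8*(u 0)+4*(u 1)) (-4-4*(u 0)-4*(u 1)) (4*(u 1)) hK0 hG
    refine ⟨u 0, by linarith, ?_⟩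
    have hu1 : u 1 = u 0 + 1 := by linarith
    ext i
    fin_cases i
    · rfl
    · exact hu1
  · rintro ⟨t, ht, rfl⟩ x hx
    rw [norm_pt, norm_pt]
    apply Real.sqrt_le_sqrt
    exact cardioidCore t (x 0) (x 1) ht hx
end
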